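/- arXiv:2012.12568 — 5 statements merged into one kernel-verified Lean document; each statement's English description precedes it below -/
import Mathlib

section
/- For any composition α of n, every ∼-equivalence class of SYRT(α) contains exactly one source tableau. -/
open Classical

namespace YRS

/-- `α` is a composition of `n`: a list of positive integers summing to `n`. -/
def IsComposition (n : ℕ) (α : List ℕ) : Prop :=
  (∀ a ∈ α, 0 < a) ∧ α.sum = n

/-- The cell `κ = (c, r)` (column `c`, row `r`, both 1-indexed, French notation)
belongs to the diagram `D(α)`. -/
def inDiagram (α : List ℕ) (κ : ℕ × ℕ) : Prop :=
  1 ≤ κ.2 ∧ κ.2 ≤ α.length ∧ 1 ≤ κ.1 ∧ κ.1 ≤ α.getD (κ.2 - 1) 0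

/-- `T` is a standard Young row-strict composition tableau of shape `α` (with entries
`1,…,n`), modelled as a total function on cells that vanishes off the diagram. -/
def IsSYRT (n : ℕ) (α : List ℕ) (T : ℕ × ℕ → ℕ) : Prop :=
  (∀ κ, ¬ inDiagram α κ → T κ = 0) ∧
  (∀ κ, inDiagram α κ → 1 ≤ T κ ∧ T κ ≤ n) ∧
  (∀ κ κ', inDiagram α κ → inDiagram α κ' → T κ = T κ' → κ = κ') ∧
  (∀ v, 1 ≤ v → v ≤ n → ∃ κ, inDiagram α κ ∧ T κ = v) ∧
  (∀ c r, inDiagram α (c, r) → inDiagram α (c + 1, r) → T (c, r) < T (c + 1, r)) ∧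
  (∀ r r', inDiagram α (1, r) → inDiagram α (1, r') → r < r' → T (1, r) < T (1, r')) ∧
  (∀ c r r', r' < r → inDiagram α (c, r) → inDiagram α (c + 1, r') →
      T (c, r) < T (c + 1, r') → inDiagram α (c + 1, r) ∧ T (c + 1, r) < T (c + 1, r'))

/-- The cell of `T` containing the entry `v` (junk value `(0,0)` if there is none). -/
noncomputable def cellOf (α : List ℕ) (T : ℕ × ℕ → ℕ) (v : ℕ) : ℕ × ℕ :=
  if h : ∃ κ, inDiagram α κ ∧ T κ = v then h.choose else (0, 0)

/-- The filling obtained from `T` by exchanging the entries `i` and `i+1`. -/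
def swapFun (i : ℕ) (T : ℕ × ℕ → ℕ) : ℕ × ℕ → ℕ := fun κ =>
  if T κ = i then i + 1 else if T κ = i + 1 then i else T κ

/-- The 0-Hecke operator `π_i` at the level of fillings:
`some T` if `i+1` is weakly left of `i`; `none` (i.e. `0`) if `i+1` is
right-adjacent to `i`; and `some (s_i T)` otherwise. -/
noncomputable def piFun (α : List ℕ) (i : ℕ) (T : ℕ × ℕ → ℕ) : Option (ℕ × ℕ → ℕ) :=
  if (cellOf α T (i + 1)).1 ≤ (cellOf α T i).1 then some T
  else if cellOf α T (i + 1) = ((cellOf α T i).1 + 1, (cellOf α T i).2) then none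
  else some (swapFun i T)

/-- The descent set of `T`: entries `i` (with `1 ≤ i ≤ n-1`) such that `i+1` lies in a
column strictly to the right of the column of `i`. -/
def DesSet (n : ℕ) (α : List ℕ) (T : ℕ × ℕ → ℕ) : Set ℕ :=
  {i | 1 ≤ i ∧ i < n ∧ (cellOf α T i).1 < (cellOf α T (i + 1)).1}

/-- `T ∼ T'`: in every column, the relative order (bottom to top) of the entries of `T`
agrees with that of `T'`. -/
def simRel (α : List ℕ) (T T' : ℕ × ℕ → ℕ) : Prop :=
  ∀ c r r', inDiagram α (c, r) → inDiagram α (c, r') →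
    (T (c, r) < T (c, r') ↔ T' (c, r) < T' (c, r'))

/-- Entries of `T` increase from bottom to top in every column (membership in `E_0`). -/
def colsIncreasing (α : List ℕ) (T : ℕ × ℕ → ℕ) : Prop :=
  ∀ c r r', inDiagram α (c, r) → inDiagram α (c, r') → r < r' → T (c, r) < T (c, r')

/-- `T` is a source tableau of its `∼`-equivalence class: no `T' ≠ T` in the class of `T`
satisfies `π_i(T') = T` for some `i`. -/
def IsSource (n : ℕ) (α : List ℕ) (T : ℕ × ℕ → ℕ) : Prop :=
  ¬ ∃ T', IsSYRT n α T' ∧ simRel α T' T ∧ T' ≠ T ∧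
      ∃ i, 1 ≤ i ∧ i < n ∧ piFun α i T' = some T

/-- One step of the `π`-operators: `π_i(T) = S` (as a tableau) for some `i`. -/
def piStep (n : ℕ) (α : List ℕ) (T S : ℕ × ℕ → ℕ) : Prop :=
  ∃ i, 1 ≤ i ∧ i < n ∧ piFun α i T = some S

/-- `T ⪯ S`: `S` is obtained from `T` by a (possibly empty) sequence of `π`-operators. -/
def preceq (n : ℕ) (α : List ℕ) : (ℕ × ℕ → ℕ) → (ℕ × ℕ → ℕ) → Prop :=
  Relation.ReflTransGen (piStep n α)

/-- Removable cell of `D(α)`: rightmost cell of the top row, or the rightmost cell of a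
row of length at least 2 such that no higher row has exactly one fewer cell. -/
def Removable (α : List ℕ) (κ : ℕ × ℕ) : Prop :=
  inDiagram α κ ∧ κ.1 = α.getD (κ.2 - 1) 0 ∧
    (κ.2 = α.length ∨
      (2 ≤ α.getD (κ.2 - 1) 0 ∧
        ∀ r, κ.2 < r → r ≤ α.length → α.getD (r - 1) 0 + 1 ≠ α.getD (κ.2 - 1) 0))

/-- A removable cell of `D(α)` containing the largest entry of `T` in its column. -/
def DistRemovable (α : List ℕ) (T : ℕ × ℕ → ℕ) (κ : ℕ × ℕ) : Prop :=
  Removable α κ ∧ ∀ r, inDiagram α (κ.1, r) → r ≠ κ.2 → T (κ.1, r) < T κ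

/-- Simple composition: whenever `α_j ≥ α_i ≥ 2` with `i < j`, some `α_k` with
`i ≤ k ≤ j` equals `α_i - 1`. -/
def SimpleComp (α : List ℕ) : Prop :=
  ∀ i j, 1 ≤ i → i < j → j ≤ α.length → 2 ≤ α.getD (i - 1) 0 →
    α.getD (i - 1) 0 ≤ α.getD (j - 1) 0 →
    ∃ k, i ≤ k ∧ k ≤ j ∧ α.getD (k - 1) 0 + 1 = α.getD (i - 1) 0

/-- Decrease the `i`-th part (1-indexed) of `α` by one, deleting it if it becomes `0`. -/
def reduceAt (α : List ℕ) (i : ℕ) : List ℕ :=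
  if α.getD (i - 1) 0 = 1 then α.eraseIdx (i - 1)
  else α.set (i - 1) (α.getD (i - 1) 0 - 1)

/-- The number of columns of `D(α)`. -/
def width (α : List ℕ) : ℕ := α.foldr max 0

/-- Boundary cell: a cell of the first column, or a cell with no cell of `D(α)` strictly
above it in its own column or the column immediately to the left. -/
def Boundary (α : List ℕ) (κ : ℕ × ℕ) : Prop :=
  inDiagram α κ ∧ (κ.1 = 1 ∨
    ∀ r, κ.2 < r → ¬ inDiagram α (κ.1, r) ∧ ¬ inDiagram α (κ.1 - 1, r))

/-- The boundary cells listed in order: up the first column, then rightwards (for each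
column `c ≥ 2` there is at most one boundary cell). -/
noncomputable def boundaryList (α : List ℕ) : List (ℕ × ℕ) :=
  ((List.range α.length).map fun r => ((1 : ℕ), r + 1)) ++
    ((List.range (width α)).filterMap fun c =>
      if h : ∃ r, Boundary α (c + 2, r) then some ((c + 2, h.choose) : ℕ × ℕ) else none)

/-- The highest cell of `D(α)` strictly below `κ` in the column immediately to the right
of `κ` that is not yet threaded (i.e. not in `S`), if any. -/
noncomputable def nextCell (α : List ℕ) (S : Finset (ℕ × ℕ)) (κ : ℕ × ℕ) :
    Option (ℕ × ℕ) :=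
  if h : ∃ r, r < κ.2 ∧ inDiagram α (κ.1 + 1, r) ∧ (κ.1 + 1, r) ∉ S ∧
      ∀ r', r < r' → r' < κ.2 → inDiagram α (κ.1 + 1, r') → (κ.1 + 1, r') ∈ S
  then some ((κ.1 + 1, h.choose) : ℕ × ℕ) else none

/-- The thread starting at `κ`, given the set `S` of already threaded cells
(`fuel` bounds the length). -/
noncomputable def threadAux (α : List ℕ) (S : Finset (ℕ × ℕ)) :
    ℕ → (ℕ × ℕ) → List (ℕ × ℕ)
  | 0, κ => [κ]
  | fuel + 1, κ =>
      κ ::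
        (match nextCell α S κ with
          | none => []
          | some κ' => threadAux α S fuel κ')

/-- The threads of the given boundary cells, constructed iteratively. -/
noncomputable def threadsAux (α : List ℕ) :
    List (ℕ × ℕ) → Finset (ℕ × ℕ) → List (List (ℕ × ℕ))
  | [], _ => []
  | κ :: rest, S =>
      threadAux α S (width α) κ ::
        threadsAux α rest (S ∪ (threadAux α S (width α) κ).toFinset)

/-- The threads of `D(α)`, in order. -/
noncomputable def threads (α : List ℕ) : List (List (ℕ × ℕ)) :=
  threadsAux α (boundaryList α) ∅

/-- Fill the threads with consecutive integers, each thread from its rightmost cell (the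
last cell of the list) to its leftmost cell (the boundary cell). -/
noncomputable def fillAux : List (List (ℕ × ℕ)) → ℕ → (ℕ × ℕ) → ℕ
  | [], _, _ => 0
  | L :: rest, off, κ =>
      if κ ∈ L then off + L.length - L.idxOf κ else fillAux rest (off + L.length) κ

/-- The tableau `T_sup`: the `k`-th thread is filled with the next `|L_k|` consecutive
integers, from right to left. -/
noncomputable def TsupFun (α : List ℕ) : ℕ × ℕ → ℕ :=
  fun κ => fillAux (threads α) 0 κ

/-- The row-by-row "superstandard" filling: row `r` gets the entries
`α_1 + ⋯ + α_{r-1} + 1, …, α_1 + ⋯ + α_r` from left to right. -/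
noncomputable def rowFill (α : List ℕ) : ℕ × ℕ → ℕ :=
  fun κ => if inDiagram α κ then (α.take (κ.2 - 1)).sum + κ.1 else 0

/-- The type of standard Young row-strict composition tableaux of shape `α`. -/
def SYRTof (n : ℕ) (α : List ℕ) : Type :=
  {T : ℕ × ℕ → ℕ // IsSYRT n α T}

/-- `π_i` applied to a basis vector of the free `ℂ`-vector space on `SYRT(α)`. -/
noncomputable def piVec (n : ℕ) (α : List ℕ) (i : ℕ) (T : SYRTof n α) :
    SYRTof n α →₀ ℂ :=
  match piFun α i T.val with
  | none => 0
  | some T' =>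
      if h : IsSYRT n α T' then Finsupp.single (⟨T', h⟩ : SYRTof n α) 1 else 0

/-- The `ℂ`-linear extension of `π_i` to the free `ℂ`-vector space on `SYRT(α)`. -/
noncomputable def piOp (n : ℕ) (α : List ℕ) (i : ℕ) :
    (SYRTof n α →₀ ℂ) →ₗ[ℂ] (SYRTof n α →₀ ℂ) :=
  Finsupp.lift (SYRTof n α →₀ ℂ) ℂ (SYRTof n α) (piVec n α i)

/-- The span `R_α^{E_0}` of the tableaux whose columns increase from bottom to top. -/
noncomputable def E0span (n : ℕ) (α : List ℕ) : Submodule ℂ (SYRTof n α →₀ ℂ) :=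
  Submodule.span ℂ
    ((fun T : SYRTof n α => Finsupp.single T (1 : ℂ)) '' {T | colsIncreasing α T.val})

/-- Apply the operators `π_i` for `i` in the list `l` from left to right
(`piSeq α [i₁, i₂, …] T = ⋯ (π_{i₂} (π_{i₁} T))`), with `none` meaning `0`. -/
noncomputable def piSeq (α : List ℕ) (l : List ℕ) (T : ℕ × ℕ → ℕ) :
    Option (ℕ × ℕ → ℕ) :=
  l.foldl (fun o i => o.bind (piFun α i)) (some T)


/-! ### Auxiliary development for `stmt10` -/

section Stmt10Aux

variable {n : ℕ} {α : List ℕ} {T T' T'' T₀ T1 T2 : ℕ × ℕ → ℕ}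

lemma simRel_refl : simRel α T T := fun _ _ _ _ _ => Iff.rfl

lemma simRel_symm (h : simRel α T T') : simRel α T' T :=
  fun c r r' h1 h2 => (h c r r' h1 h2).symm

lemma simRel_trans (h : simRel α T T') (h' : simRel α T' T'') : simRel α T T'' :=
  fun c r r' h1 h2 => (h c r r' h1 h2).trans (h' c r r' h1 h2)

lemma cellOf_spec (hT : IsSYRT n α T) {v : ℕ} (hv1 : 1 ≤ v) (hv2 : v ≤ n) :
    inDiagram α (cellOf α T v) ∧ T (cellOf α T v) = v := by
  have h : ∃ κ, inDiagram α κ ∧ T κ = v := hT.2.2.2.1 v hv1 hv2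
  rw [cellOf, dif_pos h]
  exact h.choose_spec

lemma cellOf_eq (hT : IsSYRT n α T) {κ : ℕ × ℕ} {v : ℕ} (hκ : inDiagram α κ)
    (hv : T κ = v) : cellOf α T v = κ := by
  have h : ∃ κ', inDiagram α κ' ∧ T κ' = v := ⟨κ, hκ, hv⟩
  rw [cellOf, dif_pos h]
  exact hT.2.2.1 _ _ h.choose_spec.1 hκ (by rw [h.choose_spec.2, hv])

lemma swap_lt_iff (m : ℕ) (T : ℕ × ℕ → ℕ) (κ κ' : ℕ × ℕ)
    (h1 : ¬(T κ = m ∧ T κ' = m + 1)) (h2 : ¬(T κ = m + 1 ∧ T κ' = m)) :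
    (swapFun m T κ < swapFun m T κ' ↔ T κ < T κ') := by
  simp only [swapFun]
  split_ifs <;> omega

lemma swapFun_swapFun (m : ℕ) (T : ℕ × ℕ → ℕ) : swapFun m (swapFun m T) = T := by
  funext κ
  simp only [swapFun]
  split_ifs <;> omega

lemma swap_isSYRT (hT : IsSYRT n α T) {m : ℕ} (hm1 : 1 ≤ m) (hmn : m < n)
    (hab : (cellOf α T (m + 1)).1 < (cellOf α T m).1)
    (hbad : ¬((cellOf α T m).1 = (cellOf α T (m + 1)).1 + 1 ∧
      (cellOf α T m).2 ≤ (cellOf α T (m + 1)).2)) :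
    IsSYRT n α (swapFun m T) := by
  have hA := cellOf_spec hT (show 1 ≤ m + 1 by omega) (show m + 1 ≤ n by omega)
  have hB := cellOf_spec hT hm1 (le_of_lt hmn)
  have hcm : ∀ κ, inDiagram α κ → T κ = m → κ = cellOf α T m := fun κ hκ hv =>
    (cellOf_eq hT hκ hv).symm
  have hcm1 : ∀ κ, inDiagram α κ → T κ = m + 1 → κ = cellOf α T (m + 1) := fun κ hκ hv =>
    (cellOf_eq hT hκ hv).symm
  refine ⟨?_, ?_, ?_, ?_, ?_, ?_, ?_⟩
  · intro κ hκ
    have h0 := hT.1 κ hκ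
    simp only [swapFun]
    split_ifs <;> omega
  · intro κ hκ
    have h0 := hT.2.1 κ hκ
    simp only [swapFun]
    split_ifs <;> omega
  · intro κ κ' hκ hκ' h
    apply hT.2.2.1 κ κ' hκ hκ'
    simp only [swapFun] at h
    split_ifs at h <;> omega
  · intro v hv1 hv2
    rcases eq_or_ne v m with rfl | hvm
    · obtain ⟨κ, hκ, hTκ⟩ := hT.2.2.2.1 (v + 1) (by omega) (by omega)
      refine ⟨κ, hκ, ?_⟩
      simp only [swapFun]
      split_ifs <;> omega
    · rcases eq_or_ne v (m + 1) with rfl | hvm1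
      · obtain ⟨κ, hκ, hTκ⟩ := hT.2.2.2.1 m (by omega) (by omega)
        refine ⟨κ, hκ, ?_⟩
        simp only [swapFun]
        split_ifs <;> omega
      · obtain ⟨κ, hκ, hTκ⟩ := hT.2.2.2.1 v hv1 hv2
        refine ⟨κ, hκ, ?_⟩
        simp only [swapFun]
        split_ifs <;> omega
  · intro c r hcr hc1r
    have h1 : ¬(T (c, r) = m ∧ T (c + 1, r) = m + 1) := by
      rintro ⟨e1, e2⟩
      have eB := hcm _ hcr e1
      have eA := hcm1 _ hc1r e2
      rw [← eA, ← eB] at hab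
      simp at hab
    have h2 : ¬(T (c, r) = m + 1 ∧ T (c + 1, r) = m) := by
      rintro ⟨e1, e2⟩
      have := hT.2.2.2.2.1 c r hcr hc1r
      omega
    rw [swap_lt_iff m T _ _ h1 h2]
    exact hT.2.2.2.2.1 c r hcr hc1r
  · intro r r' hr hr' hlt
    have h1 : ¬(T (1, r) = m ∧ T (1, r') = m + 1) := by
      rintro ⟨e1, e2⟩
      have eB := hcm _ hr e1
      have eA := hcm1 _ hr' e2
      rw [← eA, ← eB] at hab
      simp at hab
    have h2 : ¬(T (1, r) = m + 1 ∧ T (1, r') = m) := by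
      rintro ⟨e1, e2⟩
      have eA := hcm1 _ hr e1
      have eB := hcm _ hr' e2
      rw [← eA, ← eB] at hab
      simp at hab
    rw [swap_lt_iff m T _ _ h1 h2]
    exact hT.2.2.2.2.2.1 r r' hr hr' hlt
  · intro c r r' hrr hcr hc1r' hlt
    have h1 : ¬(T (c, r) = m ∧ T (c + 1, r') = m + 1) := by
      rintro ⟨e1, e2⟩
      have eB := hcm _ hcr e1
      have eA := hcm1 _ hc1r' e2
      rw [← eA, ← eB] at hab
      simp at hab
    have h2 : ¬(T (c, r) = m + 1 ∧ T (c + 1, r') = m) := by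
      rintro ⟨e1, e2⟩
      have eA := hcm1 _ hcr e1
      have eB := hcm _ hc1r' e2
      refine hbad ⟨?_, ?_⟩
      · rw [← eA, ← eB]
      · rw [← eA, ← eB]
        exact le_of_lt hrr
    rw [swap_lt_iff m T _ _ h1 h2] at hlt
    obtain ⟨hD, hlt2⟩ := hT.2.2.2.2.2.2 c r r' hrr hcr hc1r' hlt
    refine ⟨hD, ?_⟩
    have h3 : ¬(T (c + 1, r) = m ∧ T (c + 1, r') = m + 1) := by
      rintro ⟨e1, e2⟩
      have eB := hcm _ hD e1
      have eA := hcm1 _ hc1r' e2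
      rw [← eA, ← eB] at hab
      simp at hab
    have h4 : ¬(T (c + 1, r) = m + 1 ∧ T (c + 1, r') = m) := by
      rintro ⟨e1, e2⟩
      have eA := hcm1 _ hD e1
      have eB := hcm _ hc1r' e2
      rw [← eA, ← eB] at hab
      simp at hab
    rw [swap_lt_iff m T _ _ h3 h4]
    exact hlt2

lemma swap_simRel (hT : IsSYRT n α T) {m : ℕ}
    (hab : (cellOf α T (m + 1)).1 < (cellOf α T m).1) :
    simRel α (swapFun m T) T := by
  intro c r r' h h'
  have h1 : ¬(T (c, r) = m ∧ T (c, r') = m + 1) := by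
    rintro ⟨e1, e2⟩
    have eB := cellOf_eq hT h e1
    have eA := cellOf_eq hT h' e2
    rw [eA, eB] at hab
    simp at hab
  have h2 : ¬(T (c, r) = m + 1 ∧ T (c, r') = m) := by
    rintro ⟨e1, e2⟩
    have eA := cellOf_eq hT h e1
    have eB := cellOf_eq hT h' e2
    rw [eA, eB] at hab
    simp at hab
  exact swap_lt_iff m T _ _ h1 h2

lemma not_isSource (hT : IsSYRT n α T) {m : ℕ} (hm1 : 1 ≤ m) (hmn : m < n)
    (hab : (cellOf α T (m + 1)).1 < (cellOf α T m).1)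
    (hbad : ¬((cellOf α T m).1 = (cellOf α T (m + 1)).1 + 1 ∧
      (cellOf α T m).2 ≤ (cellOf α T (m + 1)).2)) :
    ¬ IsSource n α T := by
  intro hsrc
  apply hsrc
  have hA := cellOf_spec hT (show 1 ≤ m + 1 by omega) (show m + 1 ≤ n by omega)
  have hB := cellOf_spec hT hm1 (le_of_lt hmn)
  have hT' := swap_isSYRT hT hm1 hmn hab hbad
  have hneq : swapFun m T ≠ T := by
    intro h
    have h2 := congrFun h (cellOf α T (m + 1))
    simp only [swapFun] at h2
    split_ifs at h2 <;> omega
  have hc1 : cellOf α (swapFun m T) m = cellOf α T (m + 1) := by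
    refine cellOf_eq hT' hA.1 ?_
    simp only [swapFun]
    split_ifs <;> omega
  have hc2 : cellOf α (swapFun m T) (m + 1) = cellOf α T m := by
    refine cellOf_eq hT' hB.1 ?_
    simp only [swapFun]
    split_ifs <;> omega
  have hnadj : ¬(cellOf α T m =
      ((cellOf α T (m + 1)).1 + 1, (cellOf α T (m + 1)).2)) := by
    intro e
    refine hbad ⟨?_, ?_⟩
    · rw [e]
    · rw [e]
  refine ⟨swapFun m T, hT', swap_simRel hT hab, hneq, m, hm1, hmn, ?_⟩
  unfold piFun
  rw [hc1, hc2, if_neg (not_le.mpr hab), if_neg hnadj, swapFun_swapFun]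

/-- every descent of columns in a source tableau drops by exactly one column with
weakly increasing rows -/
def Good (n : ℕ) (α : List ℕ) (T : ℕ × ℕ → ℕ) : Prop :=
  ∀ m, 1 ≤ m → m < n → (cellOf α T (m + 1)).1 < (cellOf α T m).1 →
    (cellOf α T m).1 = (cellOf α T (m + 1)).1 + 1 ∧
      (cellOf α T m).2 ≤ (cellOf α T (m + 1)).2

lemma good_of_isSource (hT : IsSYRT n α T) (hs : IsSource n α T) : Good n α T := by
  intro m hm1 hmn hab
  by_contra hbad
  exact not_isSource hT hm1 hmn hab hbad hs

lemma core (hT1 : IsSYRT n α T1) (hT2 : IsSYRT n α T2) (hsim : simRel α T1 T2)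
    (hg : Good n α T1) {i : ℕ} (hi1 : 1 ≤ i) (hin : i ≤ n)
    (hmin : ∀ v, 1 ≤ v → v < i → cellOf α T1 v = cellOf α T2 v)
    (hlt : (cellOf α T2 i).1 < (cellOf α T1 i).1) : False := by
  classical
  have h2i := cellOf_spec hT2 hi1 hin
  set κ2 := cellOf α T2 i with hκ2def
  set j := T1 κ2 with hjdef
  have hjr := hT1.2.1 κ2 h2i.1
  have hcj : cellOf α T1 j = κ2 := cellOf_eq hT1 h2i.1 hjdef.symm
  have hij : i < j := by
    rcases lt_trichotomy j i with h | h | h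
    · have hmm := hmin j hjr.1 h
      rw [hcj] at hmm
      have h2j := cellOf_spec hT2 hjr.1 (le_trans h.le hin)
      rw [← hmm] at h2j
      have := h2i.2
      omega
    · rw [← h] at hlt
      rw [hcj] at hlt
      omega
    · exact h
  have nc2 : ∀ v, i ≤ v → v < j → (cellOf α T1 v).1 ≠ κ2.1 := by
    intro v hvi hvj hcol
    have hv1 : 1 ≤ v := le_trans hi1 hvi
    have hvn : v ≤ n := le_trans (le_of_lt hvj) hjr.2
    have h1v := cellOf_spec hT1 hv1 hvn
    set cv := cellOf α T1 v with hcvdef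
    have e1 : ((κ2.1 : ℕ), cv.2) = cv := Prod.ext hcol.symm rfl
    have hiff := hsim κ2.1 cv.2 κ2.2 (by rw [e1]; exact h1v.1) h2i.1
    rw [e1] at hiff
    have hT1lt : T1 cv < T1 κ2 := by
      rw [h1v.2, ← hjdef]
      exact hvj
    have hT2lt := hiff.1 hT1lt
    have hwr := hT2.2.1 cv h1v.1
    have hw_lt : T2 cv < i := by rw [h2i.2] at hT2lt; exact hT2lt
    have hmm := hmin (T2 cv) hwr.1 hw_lt
    rw [cellOf_eq hT2 h1v.1 rfl] at hmm
    have h1w := cellOf_spec hT1 hwr.1 (le_trans hw_lt.le hin)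
    rw [hmm] at h1w
    have := h1v.2
    have := h1w.2
    omega
  set P : ℕ → Prop := fun v => i ≤ v ∧ κ2.1 < (cellOf α T1 v).1 with hP
  have hPi : P i := ⟨le_rfl, hlt⟩
  have hij' : i ≤ j - 1 := by omega
  set m := Nat.findGreatest P (j - 1) with hmdef
  have hPm : P m := Nat.findGreatest_spec hij' hPi
  have hmle : m ≤ j - 1 := Nat.findGreatest_le _
  have him : i ≤ m := hPm.1
  have hm1 : 1 ≤ m := le_trans hi1 him
  have hmn : m < n := by omega
  have hm1n : m + 1 ≤ n := by omega
  have hA := cellOf_spec hT1 (show 1 ≤ m + 1 by omega) hm1n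
  have hAcol : (cellOf α T1 (m + 1)).1 ≤ κ2.1 := by
    rcases eq_or_lt_of_le (show m + 1 ≤ j by omega) with he | hlt2
    · rw [he, hcj]
    · have hng : ¬ P (m + 1) :=
        Nat.findGreatest_is_greatest (show Nat.findGreatest P (j - 1) < m + 1 by omega)
          (by omega)
      by_contra hcon
      exact hng ⟨by omega, lt_of_not_ge hcon⟩
  have hdesc : (cellOf α T1 (m + 1)).1 < (cellOf α T1 m).1 := lt_of_le_of_lt hAcol hPm.2
  obtain ⟨hcol_eq, hrow_le⟩ := hg m hm1 hmn hdesc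
  have hA1 : (cellOf α T1 (m + 1)).1 = κ2.1 := by
    have := hPm.2
    omega
  have hmj : m + 1 = j := by
    by_contra hne
    exact nc2 (m + 1) (by omega) (by omega) hA1
  have hAκ : cellOf α T1 (m + 1) = κ2 := by rw [hmj, hcj]
  set B := cellOf α T1 m with hBdef
  have hB := cellOf_spec hT1 hm1 (by omega)
  have hB1 : B.1 = κ2.1 + 1 := by rw [hcol_eq, hAκ]
  have hB2 : B.2 ≤ κ2.2 := by rw [← hAκ]; exact hrow_le
  have hB2ne : B.2 ≠ κ2.2 := by
    intro he
    have hBpair : B = (κ2.1 + 1, κ2.2) := Prod.ext hB1 he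
    have hrow := hT1.2.2.2.2.1 κ2.1 κ2.2 h2i.1 (by rw [← hBpair]; exact hB.1)
    rw [show ((κ2.1 : ℕ), κ2.2) = κ2 from rfl, ← hBpair] at hrow
    rw [← hjdef, hB.2] at hrow
    omega
  have hB2lt : B.2 < κ2.2 := lt_of_le_of_ne hB2 hB2ne
  have hBpair : B = (κ2.1 + 1, B.2) := Prod.ext hB1 rfl
  have hw := hT2.2.1 B hB.1
  have hwgt : i < T2 B := by
    rcases lt_trichotomy (T2 B) i with h | h | h
    · have hmm := hmin (T2 B) hw.1 (by omega)
      rw [cellOf_eq hT2 hB.1 rfl] at hmm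
      have h1w := cellOf_spec hT1 hw.1 (by omega)
      rw [hmm] at h1w
      have := hB.2
      have := h1w.2
      omega
    · have heq := hT2.2.2.1 B κ2 hB.1 h2i.1 (by rw [h, h2i.2])
      rw [heq] at hB1
      omega
    · exact h
  have hR3 := hT2.2.2.2.2.2.2 κ2.1 κ2.2 B.2 hB2lt h2i.1
      (by rw [← hBpair]; exact hB.1)
      (by
        rw [show ((κ2.1 : ℕ), κ2.2) = κ2 from rfl, ← hBpair, h2i.2]
        exact hwgt)
  obtain ⟨hDup, hlt3⟩ := hR3
  have hrow1 := hT1.2.2.2.2.1 κ2.1 κ2.2 h2i.1 hDup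
  rw [show ((κ2.1 : ℕ), κ2.2) = κ2 from rfl, ← hjdef] at hrow1
  have hiff := hsim (κ2.1 + 1) B.2 κ2.2 (by rw [← hBpair]; exact hB.1) hDup
  have hstep : T1 (κ2.1 + 1, B.2) < T1 (κ2.1 + 1, κ2.2) := by
    rw [← hBpair, hB.2]
    omega
  have h2lt := hiff.1 hstep
  rw [← hBpair] at h2lt hlt3
  omega

lemma eq_of_good (hT1 : IsSYRT n α T1) (hT2 : IsSYRT n α T2) (hsim : simRel α T1 T2)
    (hg1 : Good n α T1) (hg2 : Good n α T2) : T1 = T2 := by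
  by_contra hne
  obtain ⟨κ, hκ⟩ := Function.ne_iff.1 hne
  have hκD : inDiagram α κ := by
    by_contra h
    rw [hT1.1 κ h, hT2.1 κ h] at hκ
    exact hκ rfl
  set V : Set ℕ := {u | 1 ≤ u ∧ u ≤ n ∧ cellOf α T1 u ≠ cellOf α T2 u} with hV
  have hVne : (T1 κ) ∈ V := by
    have h1 := hT1.2.1 κ hκD
    refine ⟨h1.1, h1.2, ?_⟩
    intro he
    rw [cellOf_eq hT1 hκD rfl] at he
    have h2 := cellOf_spec hT2 h1.1 h1.2
    rw [← he] at h2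
    exact hκ h2.2.symm
  set i := sInf V with hidef
  have hiV : i ∈ V := Nat.sInf_mem ⟨_, hVne⟩
  obtain ⟨hi1, hin, hcne⟩ := hiV
  have hmin : ∀ v, 1 ≤ v → v < i → cellOf α T1 v = cellOf α T2 v := by
    intro v hv1 hvi
    by_contra hc
    have hvV : v ∈ V := ⟨hv1, by omega, hc⟩
    have := Nat.sInf_le hvV
    omega
  have hc12 : (cellOf α T1 i).1 ≠ (cellOf α T2 i).1 := by
    intro hc
    have h1i := cellOf_spec hT1 hi1 hin
    have h2i := cellOf_spec hT2 hi1 hin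
    set κ1 := cellOf α T1 i with hκ1def
    set κ2 := cellOf α T2 i with hκ2def
    have hx := hT1.2.1 κ2 h2i.1
    have hxne : T1 κ2 ≠ i := fun he => hcne (cellOf_eq hT1 h2i.1 he)
    rcases lt_or_gt_of_ne hxne with hxlt | hxgt
    · have hmm := hmin (T1 κ2) hx.1 hxlt
      rw [cellOf_eq hT1 h2i.1 rfl] at hmm
      have h2x := cellOf_spec hT2 hx.1 (by omega)
      rw [← hmm] at h2x
      have := h2i.2
      have := h2x.2
      omega
    · have e1 : ((κ2.1 : ℕ), κ1.2) = κ1 := Prod.ext hc.symm rfl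
      have hiff := hsim κ2.1 κ1.2 κ2.2 (by rw [e1]; exact h1i.1) h2i.1
      rw [e1, show ((κ2.1 : ℕ), κ2.2) = κ2 from rfl] at hiff
      have hlt1 : T1 κ1 < T1 κ2 := by
        rw [h1i.2]
        exact hxgt
      have hlt2 := hiff.1 hlt1
      have hy := hT2.2.1 κ1 h1i.1
      have hylt : T2 κ1 < i := by rw [← h2i.2]; exact hlt2
      have hmm := hmin (T2 κ1) hy.1 hylt
      rw [cellOf_eq hT2 h1i.1 rfl] at hmm
      have h1y := cellOf_spec hT1 hy.1 (by omega)
      rw [hmm] at h1y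
      have := h1i.2
      have := h1y.2
      omega
  rcases lt_or_gt_of_ne hc12 with h | h
  · exact core hT2 hT1 (simRel_symm hsim) hg2 hi1 hin
      (fun v a b => (hmin v a b).symm) h
  · exact core hT1 hT2 hsim hg1 hi1 hin hmin h

noncomputable def fval (n : ℕ) (α : List ℕ) (T : ℕ × ℕ → ℕ) : ℕ :=
  ∑ v ∈ Finset.Icc 1 n, v * (cellOf α T v).1

lemma col_le (hα : IsComposition n α) {κ : ℕ × ℕ} (hκ : inDiagram α κ) : κ.1 ≤ n := by
  obtain ⟨hpos, hsum⟩ := hα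
  obtain ⟨h1, h2, h3, h4⟩ := hκ
  have hlen : κ.2 - 1 < α.length := by omega
  have hgd : α.getD (κ.2 - 1) 0 = α[κ.2 - 1] := List.getD_eq_getElem α 0 hlen
  have hmem : α[κ.2 - 1] ∈ α := List.getElem_mem hlen
  have hle := List.single_le_sum (fun x _ => Nat.zero_le x) _ hmem
  omega

lemma fval_le (hα : IsComposition n α) (hT : IsSYRT n α T) :
    fval n α T ≤ n * (n * n) := by
  have hb : ∀ v ∈ Finset.Icc 1 n, v * (cellOf α T v).1 ≤ n * n := by
    intro v hv
    rw [Finset.mem_Icc] at hv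
    have h := cellOf_spec hT hv.1 hv.2
    exact Nat.mul_le_mul hv.2 (col_le hα h.1)
  calc fval n α T ≤ ∑ _v ∈ Finset.Icc 1 n, n * n := Finset.sum_le_sum hb
    _ = (Finset.Icc 1 n).card * (n * n) := by rw [Finset.sum_const, smul_eq_mul]
    _ ≤ n * (n * n) := by
        have hc : (Finset.Icc 1 n).card ≤ n := by
          rw [Nat.card_Icc]
          omega
        exact Nat.mul_le_mul_right _ hc

lemma fval_lt_of_swap (hT' : IsSYRT n α T') {m : ℕ} (hm1 : 1 ≤ m) (hmn : m < n)
    (hab : (cellOf α T' m).1 < (cellOf α T' (m + 1)).1)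
    (hT : IsSYRT n α (swapFun m T')) :
    fval n α (swapFun m T') < fval n α T' := by
  have hA := cellOf_spec hT' hm1 (by omega)
  have hB := cellOf_spec hT' (show 1 ≤ m + 1 by omega) (show m + 1 ≤ n by omega)
  have hcm : cellOf α (swapFun m T') m = cellOf α T' (m + 1) := by
    refine cellOf_eq hT hB.1 ?_
    simp only [swapFun]
    split_ifs <;> omega
  have hcm1 : cellOf α (swapFun m T') (m + 1) = cellOf α T' m := by
    refine cellOf_eq hT hA.1 ?_
    simp only [swapFun]
    split_ifs <;> omega
  have hrest : ∀ v ∈ ((Finset.Icc 1 n).erase (m + 1)).erase m,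
      cellOf α (swapFun m T') v = cellOf α T' v := by
    intro v hv
    obtain ⟨hvm, hv1⟩ := Finset.mem_erase.1 hv
    obtain ⟨hvm1, hvI⟩ := Finset.mem_erase.1 hv1
    obtain ⟨ha, hb2⟩ := Finset.mem_Icc.1 hvI
    have hvc := cellOf_spec hT' ha hb2
    refine cellOf_eq hT hvc.1 ?_
    simp only [swapFun]
    split_ifs <;> omega
  have hmem1 : (m + 1) ∈ Finset.Icc 1 n := Finset.mem_Icc.2 ⟨by omega, by omega⟩
  have hmem2 : m ∈ (Finset.Icc 1 n).erase (m + 1) :=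
    Finset.mem_erase.2 ⟨by omega, Finset.mem_Icc.2 ⟨hm1, by omega⟩⟩
  have expand : ∀ S : ℕ × ℕ → ℕ, fval n α S =
      (∑ v ∈ ((Finset.Icc 1 n).erase (m + 1)).erase m, v * (cellOf α S v).1)
        + m * (cellOf α S m).1 + (m + 1) * (cellOf α S (m + 1)).1 := by
    intro S
    rw [fval, ← Finset.sum_erase_add _ _ hmem1, ← Finset.sum_erase_add _ _ hmem2]
  rw [expand (swapFun m T'), expand T', hcm, hcm1]
  have hcong : ∑ v ∈ ((Finset.Icc 1 n).erase (m + 1)).erase m,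
      v * (cellOf α (swapFun m T') v).1
      = ∑ v ∈ ((Finset.Icc 1 n).erase (m + 1)).erase m, v * (cellOf α T' v).1 :=
    Finset.sum_congr rfl (fun v hv => by rw [hrest v hv])
  rw [hcong]
  have key : m * (cellOf α T' (m + 1)).1 + (m + 1) * (cellOf α T' m).1
      < m * (cellOf α T' m).1 + (m + 1) * (cellOf α T' (m + 1)).1 := by
    nlinarith [hab]
  linarith [key]

lemma exists_source (hα : IsComposition n α) (hT₀ : IsSYRT n α T₀) :
    ∃ T, IsSYRT n α T ∧ simRel α T T₀ ∧ IsSource n α T := by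
  classical
  set S : Set ℕ := {M | ∃ T, (IsSYRT n α T ∧ simRel α T T₀) ∧ fval n α T = M} with hS
  have hne : S.Nonempty := ⟨fval n α T₀, T₀, ⟨hT₀, simRel_refl⟩, rfl⟩
  have hbdd : BddAbove S := by
    refine ⟨n * (n * n), ?_⟩
    rintro M ⟨T, ⟨hT, _⟩, rfl⟩
    exact fval_le hα hT
  obtain ⟨T, ⟨hT, hsimT⟩, hfT⟩ := Nat.sSup_mem hne hbdd
  refine ⟨T, hT, hsimT, ?_⟩
  rintro ⟨T', hT'1, hT'2, hT'3, i, hi1, hin, hpi⟩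
  have hclass : simRel α T' T₀ := simRel_trans hT'2 hsimT
  have hle : fval n α T' ≤ fval n α T := by
    rw [hfT]
    exact le_csSup hbdd ⟨T', ⟨hT'1, hclass⟩, rfl⟩
  unfold piFun at hpi
  split_ifs at hpi with h1 h2
  · exact hT'3 (Option.some_injective _ hpi)
  · have hTeq : swapFun i T' = T := Option.some_injective _ hpi
    have hab : (cellOf α T' i).1 < (cellOf α T' (i + 1)).1 := lt_of_not_ge h1
    have hflt := fval_lt_of_swap hT'1 hi1 hin hab (by rw [hTeq]; exact hT)
    rw [hTeq] at hflt
    omega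

end Stmt10Aux
end YRS
/-- Every `∼`-equivalence class of `SYRT(α)` contains exactly one
source tableau. -/
theorem stmt10 (n : ℕ) (α : List ℕ) (hα : YRS.IsComposition n α)
    (T₀ : ℕ × ℕ → ℕ) (hT₀ : YRS.IsSYRT n α T₀) :
    ∃! T, YRS.IsSYRT n α T ∧ YRS.simRel α T T₀ ∧ YRS.IsSource n α T := by
  obtain ⟨T, hT, hsimT, hsrc⟩ := YRS.exists_source hα hT₀
  refine ⟨T, ⟨hT, hsimT, hsrc⟩, ?_⟩
  rintro T' ⟨hT', hsimT', hsrc'⟩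
  exact YRS.eq_of_good hT' hT (YRS.simRel_trans hsimT' (YRS.simRel_symm hsimT))
    (YRS.good_of_isSource hT' hsrc') (YRS.good_of_isSource hT hsrc)
end

section
/- Let α be a composition of n, let E_j be a ∼-equivalence class of SYRT(α), and let T_0 be its unique source tableau. Then every T ∈ E_j can be obtained from T_0 by applying a (possibly empty) sequence of operators π_i, i.e., T_0 ⪯ T for all T ∈ E_j. Consequently, the submodule R_α^{E_j} (the ℂ-span of E_j) is cyclic, generated by T_0. -/
open Classical

namespace YRS

variable {n : ℕ} {α : List ℕ} {T : ℕ × ℕ → ℕ}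

theorem my_cellOf_spec (hT : IsSYRT n α T) {v : ℕ} (h1 : 1 ≤ v) (h2 : v ≤ n) :
    inDiagram α (cellOf α T v) ∧ T (cellOf α T v) = v := by
  obtain ⟨κ, hκ⟩ := hT.2.2.2.1 v h1 h2
  have hex : ∃ κ, inDiagram α κ ∧ T κ = v := ⟨κ, hκ⟩
  rw [cellOf, dif_pos hex]
  exact hex.choose_spec

theorem my_cellOf_eq (hT : IsSYRT n α T) {κ : ℕ × ℕ} {v : ℕ}
    (hκ : inDiagram α κ) (hv : T κ = v) (h1 : 1 ≤ v) (h2 : v ≤ n) :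
    cellOf α T v = κ := by
  have hs := my_cellOf_spec hT h1 h2
  exact hT.2.2.1 _ _ hs.1 hκ (by rw [hs.2, hv])

theorem my_swap_lt {i a b : ℕ} (h : a < b) (hne : ¬(a = i ∧ b = i + 1)) :
    (if a = i then i + 1 else if a = i + 1 then i else a) <
      (if b = i then i + 1 else if b = i + 1 then i else b) := by
  split_ifs <;> omega

theorem my_swap_lt_rev {i a b : ℕ}
    (h : (if a = i then i + 1 else if a = i + 1 then i else a) <
      (if b = i then i + 1 else if b = i + 1 then i else b))
    (hne : ¬(a = i + 1 ∧ b = i)) : a < b := by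
  split_ifs at h <;> omega

theorem my_swapFun_apply (i : ℕ) (T : ℕ × ℕ → ℕ) (κ : ℕ × ℕ) :
    swapFun i T κ = if T κ = i then i + 1 else if T κ = i + 1 then i else T κ := rfl

theorem my_swap_swap (i : ℕ) (T : ℕ × ℕ → ℕ) : swapFun i (swapFun i T) = T := by
  funext κ
  simp only [swapFun]
  split_ifs <;> omega


variable {n : ℕ} {α : List ℕ} {T : ℕ × ℕ → ℕ}

theorem my_swap_isSYRT (hT : IsSYRT n α T) {i : ℕ} (hi : 1 ≤ i) (hin : i < n)
    {κi κs : ℕ × ℕ} (hκi : inDiagram α κi) (hκs : inDiagram α κs)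
    (hTi : T κi = i) (hTs : T κs = i + 1) (hcol : κs.1 < κi.1)
    (hnf : ¬(κi.1 = κs.1 + 1 ∧ κi.2 < κs.2 ∧
      (¬ inDiagram α (κi.1, κs.2) ∨ i + 1 < T (κi.1, κs.2)))) :
    IsSYRT n α (swapFun i T) := by
  obtain ⟨h0, hran, hinj, hsurj, hrow, hc1, hR3⟩ := hT
  refine ⟨?_, ?_, ?_, ?_, ?_, ?_, ?_⟩
  · intro κ hκ
    rw [my_swapFun_apply, h0 κ hκ, if_neg (by omega), if_neg (by omega)]
  · intro κ hκ
    have := hran κ hκ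
    rw [my_swapFun_apply]
    split_ifs <;> omega
  · intro κ κ' hκ hκ' h
    apply hinj κ κ' hκ hκ'
    simp only [my_swapFun_apply] at h
    split_ifs at h <;> omega
  · intro v h1 h2
    obtain ⟨κ, hk1, hk2⟩ := hsurj (if v = i then i + 1 else if v = i + 1 then i else v)
      (by split_ifs <;> omega) (by split_ifs <;> omega)
    exact ⟨κ, hk1, by rw [my_swapFun_apply, hk2]; split_ifs <;> omega⟩
  · intro c r h1 h2
    have hlt := hrow c r h1 h2
    have hne : ¬(T (c, r) = i ∧ T (c + 1, r) = i + 1) := by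
      rintro ⟨ha, hb⟩
      have e1 : (c, r) = κi := hinj _ _ h1 hκi (ha.trans hTi.symm)
      have e2 : (c + 1, r) = κs := hinj _ _ h2 hκs (hb.trans hTs.symm)
      have f1 : c = κi.1 := congrArg Prod.fst e1
      have f2 : c + 1 = κs.1 := congrArg Prod.fst e2
      omega
    simp only [my_swapFun_apply]
    exact my_swap_lt hlt hne
  · intro r r' h1 h2 hrr
    have hlt := hc1 r r' h1 h2 hrr
    have hne : ¬(T (1, r) = i ∧ T (1, r') = i + 1) := by
      rintro ⟨ha, hb⟩
      have e1 : ((1 : ℕ), r) = κi := hinj _ _ h1 hκi (ha.trans hTi.symm)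
      have e2 : ((1 : ℕ), r') = κs := hinj _ _ h2 hκs (hb.trans hTs.symm)
      have f1 : 1 = κi.1 := congrArg Prod.fst e1
      have f2 : 1 = κs.1 := congrArg Prod.fst e2
      omega
    simp only [my_swapFun_apply]
    exact my_swap_lt hlt hne
  · intro c r r' hrr h1 h2 hlt
    by_cases hcrit : T (c, r) = i + 1 ∧ T (c + 1, r') = i
    · obtain ⟨ha, hb⟩ := hcrit
      have e1 : (c, r) = κs := hinj _ _ h1 hκs (ha.trans hTs.symm)
      have e2 : (c + 1, r') = κi := hinj _ _ h2 hκi (hb.trans hTi.symm)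
      have f1 : c = κs.1 := congrArg Prod.fst e1
      have g1 : r = κs.2 := congrArg Prod.snd e1
      have f2 : c + 1 = κi.1 := congrArg Prod.fst e2
      have g2 : r' = κi.2 := congrArg Prod.snd e2
      have hD : inDiagram α (κi.1, κs.2) ∧ ¬ (i + 1 < T (κi.1, κs.2)) := by
        by_contra hcon
        exact hnf ⟨by omega, by omega, by tauto⟩
      have hpair : ((c + 1 : ℕ), r) = (κi.1, κs.2) := by rw [f2, g1]
      have hne_i : T (κi.1, κs.2) ≠ i := by
        intro h
        have e3 : (κi.1, κs.2) = κi := hinj _ _ hD.1 hκi (h.trans hTi.symm)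
        have : κs.2 = κi.2 := by rw [← e3]
        omega
      have hne_s : T (κi.1, κs.2) ≠ i + 1 := by
        intro h
        have e3 : (κi.1, κs.2) = κs := hinj _ _ hD.1 hκs (h.trans hTs.symm)
        have : κi.1 = κs.1 := by rw [← e3]
        omega
      refine ⟨by rw [hpair]; exact hD.1, ?_⟩
      have hv1 : swapFun i T (c + 1, r) = T (κi.1, κs.2) := by
        rw [my_swapFun_apply, hpair, if_neg hne_i, if_neg hne_s]
      have hv2 : swapFun i T (c + 1, r') = i + 1 := by
        rw [my_swapFun_apply, hb]; simp
      rw [hv1, hv2]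
      omega
    · have hab : T (c, r) < T (c + 1, r') :=
        my_swap_lt_rev (by simpa only [my_swapFun_apply] using hlt) hcrit
      obtain ⟨hD3, hlt3⟩ := hR3 c r r' hrr h1 h2 hab
      refine ⟨hD3, ?_⟩
      have hne2 : ¬(T (c + 1, r) = i ∧ T (c + 1, r') = i + 1) := by
        rintro ⟨ha, hb⟩
        have e1 : (c + 1, r) = κi := hinj _ _ hD3 hκi (ha.trans hTi.symm)
        have e2 : (c + 1, r') = κs := hinj _ _ h2 hκs (hb.trans hTs.symm)
        have f1 : c + 1 = κi.1 := congrArg Prod.fst e1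
        have f2 : c + 1 = κs.1 := congrArg Prod.fst e2
        omega
      simp only [my_swapFun_apply]
      exact my_swap_lt hlt3 hne2

theorem my_swap_simRel (hT : IsSYRT n α T) {i : ℕ}
    {κi κs : ℕ × ℕ} (hκi : inDiagram α κi) (hκs : inDiagram α κs)
    (hTi : T κi = i) (hTs : T κs = i + 1) (hcol : κs.1 < κi.1) :
    simRel α (swapFun i T) T := by
  intro c r r' h1 h2
  have hne : ¬(T (c, r) = i ∧ T (c, r') = i + 1) := by
    rintro ⟨ha, hb⟩
    have e1 : (c, r) = κi := hT.2.2.1 _ _ h1 hκi (ha.trans hTi.symm)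
    have e2 : (c, r') = κs := hT.2.2.1 _ _ h2 hκs (hb.trans hTs.symm)
    have f1 : c = κi.1 := congrArg Prod.fst e1
    have f2 : c = κs.1 := congrArg Prod.fst e2
    omega
  have hne' : ¬(T (c, r) = i + 1 ∧ T (c, r') = i) := by
    rintro ⟨ha, hb⟩
    have e1 : (c, r) = κs := hT.2.2.1 _ _ h1 hκs (ha.trans hTs.symm)
    have e2 : (c, r') = κi := hT.2.2.1 _ _ h2 hκi (hb.trans hTi.symm)
    have f1 : c = κs.1 := congrArg Prod.fst e1
    have f2 : c = κi.1 := congrArg Prod.fst e2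
    omega
  constructor
  · intro h
    exact my_swap_lt_rev (by simpa only [my_swapFun_apply] using h) hne'
  · intro h
    simp only [my_swapFun_apply]
    exact my_swap_lt h hne

theorem my_swap_ne {i : ℕ} {κi : ℕ × ℕ} (hTi : T κi = i) : swapFun i T ≠ T := by
  intro h
  have h2 : swapFun i T κi = i + 1 := by rw [my_swapFun_apply, hTi]; simp
  have h3 := congrFun h κi
  rw [h2, hTi] at h3
  omega

theorem my_piFun_swap (hT : IsSYRT n α T) {i : ℕ} (hi : 1 ≤ i) (hin : i < n)
    {κi κs : ℕ × ℕ} (hκi : inDiagram α κi) (hκs : inDiagram α κs)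
    (hTi : T κi = i) (hTs : T κs = i + 1) (hcol : κs.1 < κi.1)
    (hT' : IsSYRT n α (swapFun i T)) :
    piFun α i (swapFun i T) = some T := by
  have hci : cellOf α (swapFun i T) i = κs :=
    my_cellOf_eq hT' hκs (by rw [my_swapFun_apply, hTs, if_neg (by omega), if_pos rfl]) hi
      (by omega)
  have hcs : cellOf α (swapFun i T) (i + 1) = κi :=
    my_cellOf_eq hT' hκi (by rw [my_swapFun_apply, hTi, if_pos rfl]) (by omega) (by omega)
  rw [piFun, hci, hcs, if_neg (by omega : ¬ κi.1 ≤ κs.1), if_neg ?_, my_swap_swap]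
  intro h
  have f1 : κi.1 = κs.1 + 1 := by rw [h]
  have f2 : κi.2 = κs.2 := by rw [h]
  have hd1 : inDiagram α (κs.1, κs.2) := by rw [Prod.mk.eta]; exact hκs
  have hd2 : inDiagram α (κs.1 + 1, κs.2) := by
    rw [show (κs.1 + 1, κs.2) = κi from by rw [← f1, ← f2]]; exact hκi
  have := hT.2.2.2.2.1 κs.1 κs.2 hd1 hd2
  rw [Prod.mk.eta, hTs] at this
  rw [show (κs.1 + 1, κs.2) = κi from by rw [← f1, ← f2], hTi] at this
  omega

theorem my_source_forced (hT : IsSYRT n α T) (hs : IsSource n α T) {i : ℕ}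
    (hi : 1 ≤ i) (hin : i < n)
    (hcol : (cellOf α T (i + 1)).1 < (cellOf α T i).1) :
    (cellOf α T i).1 = (cellOf α T (i + 1)).1 + 1 ∧
      (cellOf α T i).2 < (cellOf α T (i + 1)).2 ∧
      (¬ inDiagram α ((cellOf α T i).1, (cellOf α T (i + 1)).2) ∨
        i + 1 < T ((cellOf α T i).1, (cellOf α T (i + 1)).2)) := by
  have hsi := my_cellOf_spec hT hi (le_of_lt hin)
  have hss := my_cellOf_spec hT (show 1 ≤ i + 1 by omega) (show i + 1 ≤ n by omega)
  by_contra hnf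
  exact hs ⟨swapFun i T,
    my_swap_isSYRT ⟨hT.1, hT.2.1, hT.2.2.1, hT.2.2.2.1, hT.2.2.2.2.1, hT.2.2.2.2.2.1,
      hT.2.2.2.2.2.2⟩ hi hin hsi.1 hss.1 hsi.2 hss.2 hcol hnf,
    my_swap_simRel hT hsi.1 hss.1 hsi.2 hss.2 hcol,
    my_swap_ne hsi.2,
    i, hi, hin,
    my_piFun_swap hT hi hin hsi.1 hss.1 hsi.2 hss.2 hcol
      (my_swap_isSYRT hT hi hin hsi.1 hss.1 hsi.2 hss.2 hcol hnf)⟩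


variable {n : ℕ} {α : List ℕ} {S T : ℕ × ℕ → ℕ}

/-- If `S` and `T` agree on the cells of all entries `< v`, then a cell holds an entry
`< v` in `S` iff it does in `T`. -/
theorem my_val_lt_iff (hS : IsSYRT n α S) (hT : IsSYRT n α T) {v : ℕ} (h2 : v ≤ n)
    (hagree : ∀ u, 1 ≤ u → u < v → cellOf α S u = cellOf α T u)
    {κ : ℕ × ℕ} (hκ : inDiagram α κ) : S κ < v ↔ T κ < v := by
  constructor
  · intro h
    have hu1 : 1 ≤ S κ := (hS.2.1 κ hκ).1
    have hcS : cellOf α S (S κ) = κ := my_cellOf_eq hS hκ rfl hu1 (by omega)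
    have hcT : cellOf α T (S κ) = κ := by rw [← hagree (S κ) hu1 h]; exact hcS
    have := (my_cellOf_spec hT hu1 (by omega : S κ ≤ n)).2
    rw [hcT] at this
    omega
  · intro h
    have hu1 : 1 ≤ T κ := (hT.2.1 κ hκ).1
    have hcT : cellOf α T (T κ) = κ := my_cellOf_eq hT hκ rfl hu1 (by omega)
    have hcS : cellOf α S (T κ) = κ := by rw [hagree (T κ) hu1 h]; exact hcT
    have := (my_cellOf_spec hS hu1 (by omega : T κ ≤ n)).2
    rw [hcS] at this
    omega

theorem my_source_unique_aux (hS : IsSYRT n α S) (hT : IsSYRT n α T)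
    (hsim : simRel α S T) (hTsrc : IsSource n α T) {v : ℕ} (h1 : 1 ≤ v) (h2 : v ≤ n)
    (hagree : ∀ u, 1 ≤ u → u < v → cellOf α S u = cellOf α T u)
    (hcol : (cellOf α S v).1 < (cellOf α T v).1) : False := by
  set x := cellOf α S v with hxd
  have hx := my_cellOf_spec hS h1 h2
  have hy := my_cellOf_spec hT h1 h2
  rw [← hxd] at hx
  have hpx : ((x.1 : ℕ), x.2) = x := Prod.mk.eta
  -- the entry of `T` at the cell `x` is `> v`
  have hTx_gt : v < T x := by
    have hb := hT.2.1 x hx.1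
    have hnlt : ¬ T x < v := fun h => by
      have := (my_val_lt_iff hS hT h2 hagree hx.1).2 h
      omega
    have hne : T x ≠ v := fun h => by
      have := my_cellOf_eq hT hx.1 h h1 h2
      rw [this] at hcol
      omega
    omega
  have hwn : T x ≤ n := (hT.2.1 x hx.1).2
  have hcw : cellOf α T (T x) = x := my_cellOf_eq hT hx.1 rfl (by omega) hwn
  -- every entry `u` with `v ≤ u < T x` lies strictly right of column `x.1` in `T`
  have claim : ∀ u, v ≤ u → u < T x → x.1 < (cellOf α T u).1 := by
    intro u hu
    induction u, hu using Nat.le_induction with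
    | base => intro _; exact hcol
    | succ u hu ih =>
      intro huw
      have hprev : x.1 < (cellOf α T u).1 := ih (by omega)
      by_contra hle
      push_neg at hle
      have hlt2 : (cellOf α T (u + 1)).1 < (cellOf α T u).1 := by omega
      have hf := my_source_forced hT hTsrc (show 1 ≤ u by omega) (show u < n by omega) hlt2
      have hcu : (cellOf α T (u + 1)).1 = x.1 := by omega
      have hp := my_cellOf_spec hT (show 1 ≤ u + 1 by omega) (show u + 1 ≤ n by omega)
      have hSp_ne : S (cellOf α T (u + 1)) ≠ v := by
        intro h
        have he := my_cellOf_eq hS hp.1 h h1 h2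
        rw [← hxd] at he
        rw [← he] at hp
        omega
      have hSp_nlt : ¬ S (cellOf α T (u + 1)) < v := fun h => by
        have := (my_val_lt_iff hS hT h2 hagree hp.1).1 h
        omega
      have hSxp : S x < S (cellOf α T (u + 1)) := by
        have := (hS.2.1 _ hp.1).1
        rw [hx.2]
        omega
      have hpp : ((x.1 : ℕ), (cellOf α T (u + 1)).2) = cellOf α T (u + 1) := by
        rw [← hcu]
      have hs2 := hsim x.1 x.2 (cellOf α T (u + 1)).2
        (by rw [hpx]; exact hx.1) (by rw [hpp]; exact hp.1)
      rw [hpx, hpp] at hs2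
      have := hs2.1 hSxp
      omega
  -- apply the source condition to the entry `T x - 1`
  have hw2 : v + 1 ≤ T x := hTx_gt
  have hsucc : T x - 1 + 1 = T x := by omega
  have hcolq : x.1 < (cellOf α T (T x - 1)).1 := claim (T x - 1) (by omega) (by omega)
  have hf := my_source_forced hT hTsrc (show 1 ≤ T x - 1 by omega)
    (show T x - 1 < n by omega) (by rw [hsucc, hcw]; exact hcolq)
  rw [hsucc, hcw] at hf
  obtain ⟨hf1, hf2, hf3⟩ := hf
  have hq := my_cellOf_spec hT (show 1 ≤ T x - 1 by omega) (show T x - 1 ≤ n by omega)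
  have hpq : ((x.1 + 1 : ℕ), (cellOf α T (T x - 1)).2) = cellOf α T (T x - 1) := by
    rw [← hf1]
  -- `S` at the cell of `T x - 1` is `> v`
  have hSq_ne : S (cellOf α T (T x - 1)) ≠ v := by
    intro h
    have he := my_cellOf_eq hS hq.1 h h1 h2
    rw [← hxd] at he
    rw [← he] at hq
    omega
  have hSq_nlt : ¬ S (cellOf α T (T x - 1)) < v := fun h => by
    have := (my_val_lt_iff hS hT h2 hagree hq.1).1 h
    omega
  have hSxq : S x < S (cellOf α T (T x - 1)) := by
    have := (hS.2.1 _ hq.1).1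
    rw [hx.2]
    omega
  -- row-strict triple condition for `S`
  have hR3 := hS.2.2.2.2.2.2 x.1 x.2 (cellOf α T (T x - 1)).2 hf2
    (by rw [hpx]; exact hx.1) (by rw [hpq]; exact hq.1)
    (by rw [hpx, hpq]; exact hSxq)
  obtain ⟨hDe, hlte⟩ := hR3
  rw [hpq] at hlte
  rw [hf1] at hf3
  rcases hf3 with hf3 | hf3
  · exact hf3 hDe
  · have hs3 := hsim (x.1 + 1) x.2 (cellOf α T (T x - 1)).2 hDe
      (by rw [hpq]; exact hq.1)
    rw [hpq] at hs3
    have := hs3.1 hlte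
    omega

theorem my_simRel_symm (h : simRel α S T) : simRel α T S :=
  fun c r r' d1 d2 => (h c r r' d1 d2).symm

theorem my_source_unique (hS : IsSYRT n α S) (hT : IsSYRT n α T)
    (hsim : simRel α S T) (hSsrc : IsSource n α S) (hTsrc : IsSource n α T) : S = T := by
  have hall : ∀ v, 1 ≤ v → v ≤ n → cellOf α S v = cellOf α T v := by
    intro v
    induction v using Nat.strong_induction_on with
    | _ v ih =>
      intro h1 h2
      by_contra hne
      have hagree : ∀ u, 1 ≤ u → u < v → cellOf α S u = cellOf α T u :=
        fun u hu1 hu2 => ih u hu2 hu1 (by omega)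
      have hagree' : ∀ u, 1 ≤ u → u < v → cellOf α T u = cellOf α S u :=
        fun u hu1 hu2 => (hagree u hu1 hu2).symm
      rcases lt_trichotomy (cellOf α S v).1 (cellOf α T v).1 with h | h | h
      · exact my_source_unique_aux hS hT hsim hTsrc h1 h2 hagree h
      · -- same column, different cells: contradiction via `simRel`
        have hx := my_cellOf_spec hS h1 h2
        have hy := my_cellOf_spec hT h1 h2
        have hSy_ne : S (cellOf α T v) ≠ v := by
          intro hh
          exact hne (my_cellOf_eq hS hy.1 hh h1 h2)
        have hSy_nlt : ¬ S (cellOf α T v) < v := fun hh => by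
          have := (my_val_lt_iff hS hT h2 hagree hy.1).1 hh
          omega
        have hSxy : S (cellOf α S v) < S (cellOf α T v) := by
          have := (hS.2.1 _ hy.1).1
          rw [hx.2]
          omega
        have hpx : (((cellOf α S v).1 : ℕ), (cellOf α S v).2) = cellOf α S v :=
          Prod.mk.eta
        have hpy : (((cellOf α S v).1 : ℕ), (cellOf α T v).2) = cellOf α T v := by
          rw [h]
        have hs2 := hsim (cellOf α S v).1 (cellOf α S v).2 (cellOf α T v).2
          (by rw [hpx]; exact hx.1) (by rw [hpy]; exact hy.1)
        rw [hpx, hpy] at hs2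
        have hTx_lt : T (cellOf α S v) < v := by
          have := hs2.1 hSxy
          omega
        have := (my_val_lt_iff hS hT h2 hagree hx.1).2 hTx_lt
        omega
      · exact my_source_unique_aux hT hS (my_simRel_symm hsim) hSsrc h1 h2 hagree' h
  funext κ
  by_cases hκ : inDiagram α κ
  · have hv1 : 1 ≤ S κ := (hS.2.1 κ hκ).1
    have hv2 : S κ ≤ n := (hS.2.1 κ hκ).2
    have e : cellOf α S (S κ) = κ := my_cellOf_eq hS hκ rfl hv1 hv2
    rw [hall _ hv1 hv2] at e
    have := (my_cellOf_spec hT hv1 hv2).2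
    rw [e] at this
    exact this.symm
  · rw [hS.1 κ hκ, hT.1 κ hκ]


variable {n : ℕ} {α : List ℕ} {T T' T₀ : ℕ × ℕ → ℕ}

theorem my_simRel_trans {A B C : ℕ × ℕ → ℕ} (h1 : simRel α A B) (h2 : simRel α B C) :
    simRel α A C :=
  fun c r r' d1 d2 => (h1 c r r' d1 d2).trans (h2 c r r' d1 d2)

theorem my_getD_le_width (l : List ℕ) (i : ℕ) : l.getD i 0 ≤ width l := by
  induction l generalizing i with
  | nil => simp [width, List.getD_nil]
  | cons a l ih =>
    cases i with
    | zero =>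
      simp only [List.getD_cons_zero, width, List.foldr]
      omega
    | succ i =>
      have := ih i
      rw [width] at this
      simp only [List.getD_cons_succ, width, List.foldr]
      omega

theorem my_col_le_width {κ : ℕ × ℕ} (hκ : inDiagram α κ) : κ.1 ≤ width α :=
  le_trans hκ.2.2.2 (my_getD_le_width α (κ.2 - 1))

/-- The numerical statistic `f(T) = ∑ v·col(v)` strictly decreasing along `π`-steps. -/
noncomputable def myF (n : ℕ) (α : List ℕ) (T : ℕ × ℕ → ℕ) : ℕ :=
  ∑ v ∈ Finset.Icc 1 n, v * (cellOf α T v).1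

theorem my_f_le (hT : IsSYRT n α T) : myF n α T ≤ n * (n * width α) := by
  have h1 : myF n α T ≤ ∑ _v ∈ Finset.Icc 1 n, n * width α := by
    apply Finset.sum_le_sum
    intro v hv
    have hv' := Finset.mem_Icc.mp hv
    exact Nat.mul_le_mul hv'.2 (my_col_le_width (my_cellOf_spec hT hv'.1 hv'.2).1)
  have h2 : ∑ _v ∈ Finset.Icc 1 n, n * width α = n * (n * width α) := by
    rw [Finset.sum_const, smul_eq_mul, Nat.card_Icc, Nat.add_sub_cancel]
  omega

theorem my_f_lt (hT' : IsSYRT n α T') {i : ℕ} (hi : 1 ≤ i) (hin : i < n)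
    (hT : IsSYRT n α (swapFun i T'))
    (hc : (cellOf α T' i).1 < (cellOf α T' (i + 1)).1) :
    myF n α (swapFun i T') < myF n α T' := by
  have hsi := my_cellOf_spec hT' hi (le_of_lt hin)
  have hss := my_cellOf_spec hT' (show 1 ≤ i + 1 by omega) (show i + 1 ≤ n by omega)
  have e1 : cellOf α (swapFun i T') i = cellOf α T' (i + 1) :=
    my_cellOf_eq hT hss.1 (by rw [my_swapFun_apply, hss.2, if_neg (by omega), if_pos rfl])
      hi (by omega)
  have e2 : cellOf α (swapFun i T') (i + 1) = cellOf α T' i :=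
    my_cellOf_eq hT hsi.1 (by rw [my_swapFun_apply, hsi.2, if_pos rfl]) (by omega) (by omega)
  have e3 : ∀ v, 1 ≤ v → v ≤ n → v ≠ i → v ≠ i + 1 →
      cellOf α (swapFun i T') v = cellOf α T' v := by
    intro v h1 h2 h3 h4
    have hsv := my_cellOf_spec hT' h1 h2
    exact my_cellOf_eq hT hsv.1
      (by rw [my_swapFun_apply, hsv.2, if_neg h3, if_neg h4]) h1 h2
  have hm1 : i ∈ Finset.Icc 1 n := Finset.mem_Icc.mpr ⟨hi, by omega⟩
  have hm2 : i + 1 ∈ (Finset.Icc 1 n).erase i :=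
    Finset.mem_erase.mpr ⟨by omega, Finset.mem_Icc.mpr ⟨by omega, by omega⟩⟩
  have key1 : myF n α (swapFun i T') = i * (cellOf α (swapFun i T') i).1 +
      ((i + 1) * (cellOf α (swapFun i T') (i + 1)).1 +
        ∑ v ∈ ((Finset.Icc 1 n).erase i).erase (i + 1), v * (cellOf α (swapFun i T') v).1) := by
    rw [myF, Finset.add_sum_erase _ (fun v => v * (cellOf α (swapFun i T') v).1) hm2,
      Finset.add_sum_erase _ (fun v => v * (cellOf α (swapFun i T') v).1) hm1]
  have key2 : myF n α T' = i * (cellOf α T' i).1 +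
      ((i + 1) * (cellOf α T' (i + 1)).1 +
        ∑ v ∈ ((Finset.Icc 1 n).erase i).erase (i + 1), v * (cellOf α T' v).1) := by
    rw [myF, Finset.add_sum_erase _ (fun v => v * (cellOf α T' v).1) hm2,
      Finset.add_sum_erase _ (fun v => v * (cellOf α T' v).1) hm1]
  rw [key1, key2, e1, e2]
  have hSig : ∑ v ∈ ((Finset.Icc 1 n).erase i).erase (i + 1), v * (cellOf α (swapFun i T') v).1
      = ∑ v ∈ ((Finset.Icc 1 n).erase i).erase (i + 1), v * (cellOf α T' v).1 := by
    apply Finset.sum_congr rfl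
    intro v hv
    have h4 := Finset.mem_erase.mp hv
    have h5 := Finset.mem_erase.mp h4.2
    have h6 := Finset.mem_Icc.mp h5.2
    rw [e3 v h6.1 h6.2 h5.1 h4.1]
  rw [hSig]
  have h9 : i * (cellOf α T' (i + 1)).1 + (i + 1) * (cellOf α T' i).1 <
      i * (cellOf α T' i).1 + (i + 1) * (cellOf α T' (i + 1)).1 := by
    rw [add_one_mul, add_one_mul]
    linarith
  linarith

theorem my_piFun_some_ne (h : piFun α i T' = some T) (hne : T' ≠ T) :
    T = swapFun i T' ∧ (cellOf α T' i).1 < (cellOf α T' (i + 1)).1 := by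
  rw [piFun] at h
  by_cases h1 : (cellOf α T' (i + 1)).1 ≤ (cellOf α T' i).1
  · rw [if_pos h1] at h
    exact absurd (Option.some.inj h) hne
  · rw [if_neg h1] at h
    by_cases h2 : cellOf α T' (i + 1) = ((cellOf α T' i).1 + 1, (cellOf α T' i).2)
    · rw [if_pos h2] at h
      simp at h
    · rw [if_neg h2] at h
      exact ⟨(Option.some.inj h).symm, by omega⟩

/-- π-step within the class of SYRTs. -/
def myStep (n : ℕ) (α : List ℕ) (U V : ℕ × ℕ → ℕ) : Prop :=
  piStep n α U V ∧ IsSYRT n α U ∧ IsSYRT n α V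

theorem my_reach (hT₀ : IsSYRT n α T₀) (hsrc : IsSource n α T₀) :
    ∀ k T, IsSYRT n α T → simRel α T T₀ → n * (n * width α) + 1 - myF n α T ≤ k →
      Relation.ReflTransGen (myStep n α) T₀ T := by
  intro k
  induction k with
  | zero =>
    intro T hT hsim hk
    have := my_f_le hT
    omega
  | succ k ih =>
    intro T hT hsim hk
    by_cases he : T = T₀
    · subst he
      exact Relation.ReflTransGen.refl
    · have hns : ¬ IsSource n α T := fun hsT => he (my_source_unique hT hT₀ hsim hsT hsrc)
      rw [IsSource, not_not] at hns
      obtain ⟨T', hT's, hsim', hne', i, hi1, hi2, hpi⟩ := hns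
      obtain ⟨heq, hcol⟩ := my_piFun_some_ne hpi hne'
      have hTswap : IsSYRT n α (swapFun i T') := heq ▸ hT
      have hflt : myF n α T < myF n α T' := by
        rw [heq]; exact my_f_lt hT's hi1 hi2 hTswap hcol
      have hble := my_f_le hT's
      exact (ih T' hT's (my_simRel_trans hsim' hsim) (by omega)).tail
        ⟨⟨i, hi1, hi2, hpi⟩, hT's, hT⟩

theorem my_piVec_eq {i : ℕ} {T : SYRTof n α} {U : ℕ × ℕ → ℕ}
    (h : piFun α i T.val = some U) (hU : IsSYRT n α U) :
    piVec n α i T = Finsupp.single (⟨U, hU⟩ : SYRTof n α) 1 := by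
  unfold piVec
  rw [h]
  exact dif_pos hU

theorem my_piOp_single (i : ℕ) (x : SYRTof n α) :
    piOp n α i (Finsupp.single x 1) = piVec n α i x := by
  rw [piOp, Finsupp.lift_apply, Finsupp.sum_single_index (by rw [zero_smul]), one_smul]

theorem my_chain_mem (W : Submodule ℂ (SYRTof n α →₀ ℂ))
    (hW : ∀ i, 1 ≤ i → i < n → ∀ x ∈ W, piOp n α i x ∈ W) :
    ∀ U V : ℕ × ℕ → ℕ, Relation.ReflTransGen (myStep n α) U V → ∀ hU : IsSYRT n α U,
      Finsupp.single (⟨U, hU⟩ : SYRTof n α) (1 : ℂ) ∈ W → ∀ hV : IsSYRT n α V,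
      Finsupp.single (⟨V, hV⟩ : SYRTof n α) (1 : ℂ) ∈ W := by
  intro U V h
  induction h with
  | refl => intro hU hm hV; exact hm
  | @tail b c hab hbc ih =>
    intro hU hm hV
    obtain ⟨⟨i, hi1, hi2, hpi⟩, hb, hc2⟩ := hbc
    have hmb := ih hU hm hb
    have hiw := hW i hi1 hi2 _ hmb
    have key := (my_piOp_single i ⟨b, hb⟩).trans (my_piVec_eq (T := ⟨b, hb⟩) hpi hV)
    exact (congrArg (fun x => x ∈ W) key).mp hiw

end YRS

/-- If `T₀` is the source tableau of its `∼`-class `E_j`, then every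
tableau in `E_j` is reachable from `T₀` by a sequence of `π`-operators; consequently the
submodule `R_α^{E_j}` is cyclic, generated by `T₀`: any `π`-invariant subspace
containing `T₀` contains every basis vector of the class. -/
theorem stmt11 (n : ℕ) (α : List ℕ) (hα : YRS.IsComposition n α)
    (T₀ : ℕ × ℕ → ℕ) (hT₀ : YRS.IsSYRT n α T₀) (hsrc : YRS.IsSource n α T₀) :
    (∀ T, YRS.IsSYRT n α T → YRS.simRel α T T₀ → YRS.preceq n α T₀ T) ∧
    (∀ W : Submodule ℂ (YRS.SYRTof n α →₀ ℂ),
      (∀ i, 1 ≤ i → i < n → ∀ x ∈ W, YRS.piOp n α i x ∈ W) →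
      Finsupp.single (⟨T₀, hT₀⟩ : YRS.SYRTof n α) (1 : ℂ) ∈ W →
      ∀ T : YRS.SYRTof n α, YRS.simRel α T.val T₀ →
        Finsupp.single T (1 : ℂ) ∈ W) := by
  have hreach : ∀ T, YRS.IsSYRT n α T → YRS.simRel α T T₀ →
      Relation.ReflTransGen (YRS.myStep n α) T₀ T := by
    intro T hT hsim
    exact YRS.my_reach hT₀ hsrc (n * (n * YRS.width α) + 1) T hT hsim (by omega)
  constructor
  · intro T hT hsim
    exact Relation.ReflTransGen.mono (fun a b (hab : YRS.myStep n α a b) => hab.1) _ _ (hreach T hT hsim)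
  · intro W hW hmem T hsimT
    exact YRS.my_chain_mem W hW T₀ T.val (hreach T.val T.2 hsimT) hT₀ hmem T.2
end

section
/- Let α = (α_1,…,α_k) be a simple composition of n whose diagram D(α) has a removable cell in row i. Then the composition obtained from (α_1,…,α_i − 1,…,α_k) by deleting the i-th part if α_i − 1 = 0 is also simple. -/
open Classical

private lemma getD_eraseIdx_lt (l : List ℕ) (j k d : ℕ) (h : j < k) :
    (l.eraseIdx k).getD j d = l.getD j d := by
  simp [List.getD_eq_getElem?_getD, List.getElem?_eraseIdx_of_lt, h]

private lemma getD_set_ne' (l : List ℕ) (j k v d : ℕ) (h : j ≠ k) :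
    (l.set k v).getD j d = l.getD j d := by
  simp [List.getD_eq_getElem?_getD, List.getElem?_set_ne (Ne.symm h)]

private lemma getD_set_self' (l : List ℕ) (k v d : ℕ) (h : k < l.length) :
    (l.set k v).getD k d = v := by
  simp [List.getD_eq_getElem?_getD, List.getElem?_set_self, h]

/-- If `α` is a simple composition with a removable cell in row `i`,
then the composition obtained by decreasing the `i`-th part by one (deleting it if it
becomes zero) is also simple. -/
theorem stmt12 (n : ℕ) (α : List ℕ) (hα : YRS.IsComposition n α)
    (hs : YRS.SimpleComp α) (i : ℕ) (hi1 : 1 ≤ i) (hi2 : i ≤ α.length)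
    (hrem : ∃ κ, YRS.Removable α κ ∧ κ.2 = i) :
    YRS.SimpleComp (YRS.reduceAt α i) := by
  obtain ⟨κ, ⟨hκdiag, hκcol, hcase⟩, hκi⟩ := hrem
  rw [hκi] at hcase
  -- m ≥ 1
  have hm1 : 1 ≤ α.getD (i - 1) 0 := by
    obtain ⟨-, -, h1, h2⟩ := hκdiag
    rw [hκi] at h2
    omega
  unfold YRS.reduceAt
  by_cases h1 : α.getD (i - 1) 0 = 1
  · -- erase case: i must equal α.length
    have hi : i = α.length := by
      rcases hcase with h | ⟨h2, _⟩
      · exact h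
      · omega
    rw [if_pos h1]
    intro a b ha hab hb h2a hle
    have hlen : (α.eraseIdx (i - 1)).length = α.length - 1 := by
      rw [List.length_eraseIdx]
      have : i - 1 < α.length := by omega
      simp [this]
    have hb' : b ≤ α.length - 1 := by omega
    have hgb : (α.eraseIdx (i - 1)).getD (b - 1) 0 = α.getD (b - 1) 0 :=
      getD_eraseIdx_lt _ _ _ _ (by omega)
    have hga : (α.eraseIdx (i - 1)).getD (a - 1) 0 = α.getD (a - 1) 0 :=
      getD_eraseIdx_lt _ _ _ _ (by omega)
    rw [hga] at h2a hle
    rw [hgb] at hle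
    obtain ⟨k, hk1, hk2, hk3⟩ := hs a b ha hab (by omega) h2a hle
    exact ⟨k, hk1, hk2, by
      rw [getD_eraseIdx_lt _ _ _ _ (by omega), hga]; exact hk3⟩
  · -- set case
    have hm2 : 2 ≤ α.getD (i - 1) 0 := by omega
    set m := α.getD (i - 1) 0 with hm
    rw [if_neg h1]
    intro a b ha hab hb h2a hle
    have hblen : b ≤ α.length := by simpa using hb
    have hilt : i - 1 < α.length := by omega
    have hseti : (α.set (i - 1) (m - 1)).getD (i - 1) 0 = m - 1 :=
      getD_set_self' _ _ _ _ hilt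
    -- removability clause, for the case i < α.length
    have hrm : ∀ r, i < r → r ≤ α.length → α.getD (r - 1) 0 + 1 ≠ m := by
      intro r hr1 hr2
      rcases hcase with h | ⟨-, h2⟩
      · omega
      · exact h2 r hr1 hr2
    by_cases hbi : b = i
    · -- b = i, a < i
      have hai : a ≠ i := by omega
      have hga : (α.set (i - 1) (m - 1)).getD (a - 1) 0 = α.getD (a - 1) 0 :=
        getD_set_ne' _ _ _ _ _ (by omega)
      rw [hga] at h2a hle
      rw [hbi, hseti] at hle
      obtain ⟨k, hk1, hk2, hk3⟩ := hs a i ha (by omega) hi2 h2a (by omega)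
      have hki : k ≠ i := by
        intro h; rw [h] at hk3; omega
      exact ⟨k, hk1, by omega, by
        rw [getD_set_ne' _ _ _ _ _ (by omega), hga]; exact hk3⟩
    · by_cases hai : a = i
      · -- a = i: impossible
        exfalso
        have hib : i < b := by omega
        have hgb : (α.set (i - 1) (m - 1)).getD (b - 1) 0 = α.getD (b - 1) 0 :=
          getD_set_ne' _ _ _ _ _ (by omega)
        rw [hai, hseti] at h2a hle
        rw [hgb] at hle
        -- α_b ≥ m - 1; if α_b = m - 1 contradiction with hrm; else apply hs
        have hbne : α.getD (b - 1) 0 ≠ m - 1 := by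
          intro h; exact hrm b hib hblen (by omega)
        have hble : m ≤ α.getD (b - 1) 0 := by omega
        obtain ⟨k, hk1, hk2, hk3⟩ := hs i b hi1 hib hblen (by omega) hble
        rcases Nat.eq_or_lt_of_le hk1 with h | h
        · rw [← h] at hk3; omega
        · exact hrm k h (by omega) (by omega)
      · -- a ≠ i, b ≠ i
        have hga : (α.set (i - 1) (m - 1)).getD (a - 1) 0 = α.getD (a - 1) 0 :=
          getD_set_ne' _ _ _ _ _ (by omega)
        have hgb : (α.set (i - 1) (m - 1)).getD (b - 1) 0 = α.getD (b - 1) 0 :=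
          getD_set_ne' _ _ _ _ _ (by omega)
        rw [hga] at h2a hle
        rw [hgb] at hle
        obtain ⟨k, hk1, hk2, hk3⟩ := hs a b ha hab hblen h2a hle
        by_cases hki : k = i
        · -- α_a = m + 1, a < i < b: contradiction via hrm
          exfalso
          rw [hki] at hk3 hk1 hk2
          have hib : i < b := by omega
          have hble : m ≤ α.getD (b - 1) 0 := by omega
          obtain ⟨k', hk'1, hk'2, hk'3⟩ := hs i b hi1 hib hblen hm2 hble
          rcases Nat.eq_or_lt_of_le hk'1 with h | h
          · rw [← h] at hk'3; omega
          · exact hrm k' h (by omega) hk'3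
        · exact ⟨k, hk1, hk2, by
            rw [getD_set_ne' _ _ _ _ _ (by omega), hga]; exact hk3⟩
end

section
/- A composition α of n is simple if and only if for every T ∈ SYRT(α), the entries increase from bottom to top in every column of T. -/
open Classical

section Stmt13Aux
open YRS
open scoped Classical

namespace S13

def P (α : List ℕ) (r : ℕ) : ℕ := (α.take r).sum

lemma getD_def (α : List ℕ) (m : ℕ) : α.getD m 0 = α[m]?.getD 0 :=
  List.getD_eq_getElem?_getD

lemma getD_pos {α : List ℕ} (hpos : ∀ a ∈ α, 0 < a) {m : ℕ} (hm : m < α.length) :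
    0 < α.getD m 0 := by
  rw [getD_def, List.getElem?_eq_getElem hm]
  exact hpos _ (List.getElem_mem hm)

lemma P_succ (α : List ℕ) {r : ℕ} (h : r < α.length) :
    P α (r + 1) = P α r + α.getD r 0 := by
  rw [P, P, List.sum_take_succ _ _ h, getD_def, List.getElem?_eq_getElem h]
  rfl

lemma P_mono (α : List ℕ) {r s : ℕ} (h : r ≤ s) : P α r ≤ P α s := by
  have h2 : (α.take s).take r ++ (α.take s).drop r = α.take s :=
    List.take_append_drop r (α.take s)
  have h3 := congrArg List.sum h2
  rw [List.sum_append, List.take_take, min_eq_left h] at h3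
  unfold P; omega

lemma P_lt (α : List ℕ) (hpos : ∀ a ∈ α, 0 < a) {r s : ℕ} (hr : r < s)
    (hs : s ≤ α.length) : P α r < P α s := by
  have h1 : r < α.length := by omega
  have h2 := P_succ α h1
  have h3 := getD_pos hpos h1
  have h4 := P_mono α (show r + 1 ≤ s by omega)
  omega

lemma P_len (α : List ℕ) : P α α.length = α.sum := by rw [P, List.take_length]

lemma inDiagram_iff (α : List ℕ) (c r : ℕ) :
    inDiagram α (c, r) ↔ 1 ≤ r ∧ r ≤ α.length ∧ 1 ≤ c ∧ c ≤ α.getD (r-1) 0 :=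
  Iff.rfl

lemma val_le_P {α : List ℕ} {c r : ℕ} (hd : inDiagram α (c, r)) :
    P α (r-1) + c ≤ P α r := by
  rw [inDiagram_iff] at hd
  obtain ⟨h1, h2, h3, h4⟩ := hd
  have h5 := P_succ α (show r-1 < α.length by omega)
  rw [show r-1+1 = r by omega] at h5
  omega

lemma val_inj {α : List ℕ} {c r c' r' : ℕ}
    (hd : inDiagram α (c, r)) (hd' : inDiagram α (c', r'))
    (h : P α (r-1) + c = P α (r'-1) + c') : c = c' ∧ r = r' := by
  have hv := val_le_P hd
  have hv' := val_le_P hd'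
  rw [inDiagram_iff] at hd hd'
  rcases lt_trichotomy r r' with hlt | heq | hgt
  · have := P_mono α (show r ≤ r'-1 by omega); omega
  · subst heq; omega
  · have := P_mono α (show r' ≤ r-1 by omega); omega

lemma exists_cell {α : List ℕ} (hpos : ∀ a ∈ α, 0 < a) {v : ℕ} (hv1 : 1 ≤ v)
    (hvn : v ≤ α.sum) : ∃ c r, inDiagram α (c, r) ∧ P α (r-1) + c = v := by
  have hex : ∃ r, v ≤ P α r := ⟨α.length, by rw [P_len]; exact hvn⟩
  have hr0 := Nat.find_spec hex
  have hpos0 : 0 < Nat.find hex := by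
    rcases Nat.eq_zero_or_pos (Nat.find hex) with h | h
    · exfalso; have h2 := Nat.find_spec hex; rw [h] at h2
      have : P α 0 = 0 := rfl
      omega
    · exact h
  have hmin : ¬ (v ≤ P α (Nat.find hex - 1)) := Nat.find_min hex (by omega)
  have hlen : Nat.find hex ≤ α.length :=
    Nat.find_min' hex (by rw [P_len]; exact hvn)
  refine ⟨v - P α (Nat.find hex - 1), Nat.find hex, ?_, by omega⟩
  rw [inDiagram_iff]
  refine ⟨hpos0, hlen, by omega, ?_⟩
  have h1 : Nat.find hex - 1 < α.length := by omega
  have h2 := P_succ α h1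
  rw [show Nat.find hex - 1 + 1 = Nat.find hex by omega] at h2
  omega

/-! ### The swap map `sig` used for the non-simple construction -/

def sig (A B v : ℕ) : ℕ := if v = A then B else if A < v ∧ v ≤ B then v - 1 else v

lemma sig_lt {A B v w : ℕ} (hAB : A < B) (h : v < w) (hv : v ≠ A) :
    sig A B v < sig A B w := by
  unfold sig; split_ifs <;> omega

lemma sig_inj {A B v w : ℕ} (hAB : A < B) (h : sig A B v = sig A B w) : v = w := by
  unfold sig at h; split_ifs at h <;> omega

lemma sig_A (A B : ℕ) : sig A B A = B := by unfold sig; simp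

lemma sig_mid {A B v : ℕ} (h1 : A < v) (h2 : v ≤ B) : sig A B v = v - 1 := by
  unfold sig; split_ifs <;> omega

lemma sig_bounds {A B v n : ℕ} (hAB : A < B) (hA : 1 ≤ A) (hB : B ≤ n) (h1 : 1 ≤ v) (h2 : v ≤ n) :
    1 ≤ sig A B v ∧ sig A B v ≤ n := by
  unfold sig; split_ifs <;> omega

lemma sig_surj {A B v n : ℕ} (hAB : A < B) (hA : 1 ≤ A) (hB : B ≤ n)
    (h1 : 1 ≤ v) (h2 : v ≤ n) : ∃ w, 1 ≤ w ∧ w ≤ n ∧ sig A B w = v := by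
  by_cases hvB : v = B
  · refine ⟨A, hA, by omega, ?_⟩
    rw [sig_A, hvB]
  by_cases hmid : A ≤ v ∧ v < B
  · refine ⟨v + 1, by omega, by omega, ?_⟩
    rw [sig_mid (by omega) (by omega)]
    omega
  · exact ⟨v, h1, h2, by unfold sig; split_ifs <;> omega⟩

noncomputable def bT (α : List ℕ) (A B : ℕ) : ℕ × ℕ → ℕ :=
  fun κ => if inDiagram α κ then sig A B (P α (κ.2 - 1) + κ.1) else 0

lemma bT_pos (α : List ℕ) (A B c r : ℕ) (hd : inDiagram α (c, r)) :
    bT α A B (c, r) = sig A B (P α (r-1) + c) := by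
  simp only [bT]; rw [if_pos hd]

lemma bT_neg {α : List ℕ} {A B : ℕ} {κ : ℕ × ℕ} (hd : ¬ inDiagram α κ) :
    bT α A B κ = 0 := by
  simp only [bT]; rw [if_neg hd]

/-! ### Backward direction: a non-simple composition admits a bad SYRT -/

lemma backward {n : ℕ} {α : List ℕ} (hcomp : IsComposition n α)
    (i j : ℕ) (hi : 1 ≤ i) (hij : i < j) (hj : j ≤ α.length)
    (h2 : 2 ≤ α.getD (i-1) 0) (hle : α.getD (i-1) 0 ≤ α.getD (j-1) 0)
    (hk : ∀ k, i ≤ k → k ≤ j → α.getD (k-1) 0 + 1 ≠ α.getD (i-1) 0) :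
    ∃ T, IsSYRT n α T ∧ ¬ colsIncreasing α T := by
  obtain ⟨hpos, hsum⟩ := hcomp
  set a := α.getD (i-1) 0 with ha
  set A := P α (i-1) + a with hA
  set B := P α (j-1) + a with hB
  have hAB : A < B := by
    have := P_lt α hpos (show i-1 < j-1 by omega) (show j-1 ≤ α.length by omega)
    omega
  have hA1 : 1 ≤ A := by omega
  have hPj : P α j = P α (j-1) + α.getD (j-1) 0 := by
    have h1 := P_succ α (show j-1 < α.length by omega)
    rw [show j-1+1 = j by omega] at h1; exact h1
  have hBn : B ≤ n := by
    have h4 := P_mono α hj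
    rw [P_len, hsum] at h4
    omega
  have hval : ∀ c r, inDiagram α (c, r) → 1 ≤ P α (r-1) + c ∧ P α (r-1) + c ≤ n := by
    intro c r hd
    have h1 := val_le_P hd
    have hd' := hd; rw [inDiagram_iff] at hd'
    have h2' := P_mono α hd'.2.1
    rw [P_len, hsum] at h2'
    omega
  have hdai : inDiagram α (a, i) := by
    rw [inDiagram_iff]; exact ⟨hi, by omega, by omega, by omega⟩
  have hdaj : inDiagram α (a, j) := by
    rw [inDiagram_iff]; exact ⟨by omega, hj, by omega, by omega⟩
  refine ⟨bT α A B, ⟨?_, ?_, ?_, ?_, ?_, ?_, ?_⟩, ?_⟩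
  · intro κ hκ; exact bT_neg hκ
  · intro κ hκ
    obtain ⟨c, r⟩ := κ
    rw [bT_pos _ _ _ _ _ hκ]
    have h := hval c r hκ
    exact sig_bounds hAB hA1 hBn h.1 h.2
  · intro κ κ' hκ hκ' h
    obtain ⟨c, r⟩ := κ; obtain ⟨c', r'⟩ := κ'
    rw [bT_pos _ _ _ _ _ hκ, bT_pos _ _ _ _ _ hκ'] at h
    have h2' := val_inj hκ hκ' (sig_inj hAB h)
    rw [Prod.mk.injEq]; exact h2'
  · intro v hv1 hvn
    obtain ⟨w, hw1, hwn, hws⟩ := sig_surj hAB hA1 hBn hv1 hvn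
    obtain ⟨c, r, hd, hval'⟩ := exists_cell hpos hw1 (by rw [hsum]; exact hwn)
    exact ⟨(c, r), hd, by rw [bT_pos _ _ _ _ _ hd, hval', hws]⟩
  · intro c r hd hd'
    rw [bT_pos _ _ _ _ _ hd, bT_pos _ _ _ _ _ hd']
    have hne : P α (r-1) + c ≠ A := by
      intro h
      obtain ⟨hc, hr⟩ := val_inj hd hdai (by rw [h, hA])
      subst hr
      rw [inDiagram_iff] at hd'
      omega
    exact sig_lt hAB (by omega) hne
  · intro r r' hd hd' hrr
    rw [bT_pos _ _ _ _ _ hd, bT_pos _ _ _ _ _ hd']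
    have hdo := hd; have hdo' := hd'
    rw [inDiagram_iff] at hdo hdo'
    have hlt : P α (r-1) + 1 < P α (r'-1) + 1 := by
      have := P_lt α hpos (show r-1 < r'-1 by omega) (show r'-1 ≤ α.length by omega)
      omega
    have hne : P α (r-1) + 1 ≠ A := by
      intro h
      obtain ⟨hc, hr⟩ := val_inj hd hdai (by rw [h, hA])
      omega
    exact sig_lt hAB hlt hne
  · intro c r r' hrr hd1 hd2 hTlt
    rw [bT_pos _ _ _ _ _ hd1, bT_pos _ _ _ _ _ hd2] at hTlt
    have hd1' := hd1; rw [inDiagram_iff] at hd1'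
    have hd2' := hd2; rw [inDiagram_iff] at hd2'
    have hyx : P α (r'-1) + (c+1) < P α (r-1) + c := by
      have h1 := val_le_P hd2
      have h2' := P_mono α (show r' ≤ r-1 by omega)
      omega
    have hyA : P α (r'-1) + (c+1) = A := by
      by_contra hne
      have := sig_lt hAB hyx hne
      omega
    obtain ⟨hca, hri⟩ := val_inj hd2 hdai (by rw [hyA, hA])
    have hsA : sig A B (P α (r'-1) + (c+1)) = B := by rw [hyA, sig_A]
    rw [hsA] at hTlt
    have hxB : P α (r-1) + c ≤ B := by
      by_contra hgt; push_neg at hgt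
      have hfix : sig A B (P α (r-1) + c) = P α (r-1) + c := by
        unfold sig; split_ifs <;> omega
      omega
    have hrj : r ≤ j := by
      by_contra hgt; push_neg at hgt
      have h3 := P_mono α (show j ≤ r-1 by omega)
      omega
    have hne2 := hk r (by omega) hrj
    have har : a ≤ α.getD (r-1) 0 := by omega
    have hdar : inDiagram α (c+1, r) := by
      rw [inDiagram_iff]; exact ⟨by omega, by omega, by omega, by omega⟩
    refine ⟨hdar, ?_⟩
    rw [bT_pos _ _ _ _ _ hdar, bT_pos _ _ _ _ _ hd2, hsA]
    have hlo : A < P α (r-1) + (c+1) := by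
      have := P_lt α hpos (show i-1 < r-1 by omega) (show r-1 ≤ α.length by omega)
      omega
    have hhi : P α (r-1) + (c+1) ≤ B := by
      have := P_mono α (show r-1 ≤ j-1 by omega)
      omega
    rw [sig_mid hlo hhi]
    omega
  · intro hcol
    have h1' := hcol a i j hdai hdaj hij
    rw [bT_pos _ _ _ _ _ hdai, bT_pos _ _ _ _ _ hdaj, ← hA, ← hB, sig_A,
      sig_mid hAB le_rfl] at h1'
    omega

/-! ### Forward direction: reduction lemmas -/

lemma reduceAt_one {α : List ℕ} {r0 : ℕ} (h1 : 1 ≤ r0) (h2 : r0 ≤ α.length)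
    (hone : α.getD (r0-1) 0 = 1) (hr0 : r0 = α.length) :
    (reduceAt α r0).length = α.length - 1 ∧
      ∀ m, m < α.length - 1 → (reduceAt α r0).getD m 0 = α.getD m 0 := by
  rw [reduceAt, if_pos hone, List.eraseIdx_eq_take_drop_succ,
    List.drop_eq_nil_of_le (by omega), List.append_nil]
  constructor
  · rw [List.length_take]; omega
  · intro m hm
    rw [getD_def, List.getElem?_take, if_pos (by omega)]
    exact (getD_def α m).symm

lemma reduceAt_ge2 {α : List ℕ} {r0 : ℕ} (h1 : 1 ≤ r0) (h2 : r0 ≤ α.length)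
    (hone : α.getD (r0-1) 0 ≠ 1) :
    (reduceAt α r0).length = α.length ∧
    (reduceAt α r0).getD (r0-1) 0 = α.getD (r0-1) 0 - 1 ∧
    ∀ m, m ≠ r0-1 → (reduceAt α r0).getD m 0 = α.getD m 0 := by
  rw [reduceAt, if_neg hone]
  refine ⟨List.length_set, ?_, ?_⟩
  · rw [getD_def, List.getElem?_set, if_pos rfl, if_pos (by omega)]
    rfl
  · intro m hm
    rw [getD_def, List.getElem?_set, if_neg (by omega)]
    exact (getD_def α m).symm

lemma reduce_pos {α : List ℕ} {r0 : ℕ} (h1 : 1 ≤ r0) (h2 : r0 ≤ α.length)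
    (hpos : ∀ a ∈ α, 0 < a) : ∀ x ∈ reduceAt α r0, 0 < x := by
  intro x hx
  rw [reduceAt] at hx
  split_ifs at hx with h
  · exact hpos x (List.mem_of_mem_eraseIdx hx)
  · rcases List.mem_or_eq_of_mem_set hx with h' | h'
    · exact hpos x h'
    · have := getD_pos hpos (show r0-1 < α.length by omega)
      omega

lemma reduce_diagram {α : List ℕ} {r0 : ℕ} (h1 : 1 ≤ r0) (h2 : r0 ≤ α.length)
    (hc1 : α.getD (r0-1) 0 = 1 → r0 = α.length) (κ : ℕ × ℕ) :
    inDiagram (reduceAt α r0) κ ↔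
      inDiagram α κ ∧ κ ≠ (α.getD (r0-1) 0, r0) := by
  obtain ⟨c, r⟩ := κ
  rw [inDiagram_iff, inDiagram_iff]
  simp only [ne_eq, Prod.mk.injEq, not_and]
  by_cases hone : α.getD (r0-1) 0 = 1
  · have hr0 := hc1 hone
    obtain ⟨hlen, hgd⟩ := reduceAt_one h1 h2 hone hr0
    rw [hlen]
    constructor
    · rintro ⟨a1, a2, a3, a4⟩
      rw [hgd (r-1) (by omega)] at a4
      exact ⟨⟨a1, by omega, a3, a4⟩, fun _ => by omega⟩
    · rintro ⟨⟨a1, a2, a3, a4⟩, hne⟩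
      have hrne : r ≠ r0 := by
        intro hr
        rw [hr] at a4
        exact hne (by omega) hr
      refine ⟨a1, by omega, a3, ?_⟩
      rw [hgd (r-1) (by omega)]
      exact a4
  · obtain ⟨hlen, hself, hother⟩ := reduceAt_ge2 h1 h2 hone
    rw [hlen]
    constructor
    · rintro ⟨a1, a2, a3, a4⟩
      by_cases hr : r = r0
      · rw [hr, hself] at a4
        refine ⟨⟨a1, a2, a3, by rw [hr]; omega⟩, fun hc hr' => ?_⟩
        omega
      · rw [hother (r-1) (by omega)] at a4
        exact ⟨⟨a1, a2, a3, a4⟩, fun _ hr' => hr hr'⟩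
    · rintro ⟨⟨a1, a2, a3, a4⟩, hne⟩
      refine ⟨a1, a2, a3, ?_⟩
      by_cases hr : r = r0
      · have hc : c ≠ α.getD (r0-1) 0 := fun h => hne h hr
        rw [hr] at a4 ⊢
        rw [hself]
        omega
      · rw [hother (r-1) (by omega)]
        exact a4

lemma reduce_simple {α : List ℕ} {r0 : ℕ} (h1 : 1 ≤ r0) (h2 : r0 ≤ α.length)
    (hsimp : SimpleComp α)
    (hiii : ∀ r, r0 < r → r ≤ α.length → α.getD (r-1) 0 + 1 ≠ α.getD (r0-1) 0)
    (hBB : ∀ r, r0 < r → r ≤ α.length → α.getD (r-1) 0 < α.getD (r0-1) 0)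
    (hc1 : α.getD (r0-1) 0 = 1 → r0 = α.length) :
    SimpleComp (reduceAt α r0) := by
  by_cases hone : α.getD (r0-1) 0 = 1
  · have hr0 := hc1 hone
    obtain ⟨hlen, hgd⟩ := reduceAt_one h1 h2 hone hr0
    intro i j hi hij hjlen hβ2 hβle
    rw [hlen] at hjlen
    have ei := hgd (i-1) (by omega)
    have ej := hgd (j-1) (by omega)
    rw [ei] at hβ2
    rw [ei, ej] at hβle
    obtain ⟨k, hk1, hk2, hk3⟩ := hsimp i j hi hij (by omega) hβ2 hβle
    refine ⟨k, hk1, hk2, ?_⟩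
    rw [hgd (k-1) (by omega), ei]
    exact hk3
  · obtain ⟨hlen, hself, hother⟩ := reduceAt_ge2 h1 h2 hone
    intro i j hi hij hjlen hβ2 hβle
    rw [hlen] at hjlen
    by_cases hir : i = r0
    · exfalso
      rw [hir, hself] at hβ2
      rw [hir, hself, hother (j-1) (by omega)] at hβle
      have hBj := hBB j (by omega) (by omega)
      have hiiij := hiii j (by omega) (by omega)
      omega
    by_cases hjr : j = r0
    · rw [hother (i-1) (by omega)] at hβ2
      rw [hother (i-1) (by omega), hjr, hself] at hβle
      obtain ⟨k, hk1, hk2, hk3⟩ :=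
        hsimp i r0 hi (by omega) h2 hβ2 (by omega)
      have hkr0 : k ≠ r0 := by
        intro h
        rw [h] at hk3
        omega
      refine ⟨k, hk1, by omega, ?_⟩
      rw [hother (k-1) (by omega), hother (i-1) (by omega)]
      exact hk3
    · rw [hother (i-1) (by omega)] at hβ2
      rw [hother (i-1) (by omega), hother (j-1) (by omega)] at hβle
      obtain ⟨k, hk1, hk2, hk3⟩ := hsimp i j hi hij (by omega) hβ2 hβle
      by_cases hmid : i < r0 ∧ r0 < j
      · have hBj := hBB j (by omega) (by omega)
        have hiiij := hiii j (by omega) (by omega)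
        have hkr0 : k ≠ r0 := by
          intro h
          rw [h] at hk3
          omega
        refine ⟨k, hk1, hk2, ?_⟩
        rw [hother (k-1) (by omega), hother (i-1) (by omega)]
        exact hk3
      · push_neg at hmid
        have hkr0 : k ≠ r0 := by omega
        refine ⟨k, hk1, hk2, ?_⟩
        rw [hother (k-1) (by omega), hother (i-1) (by omega)]
        exact hk3

/-! ### Forward direction: main induction -/

lemma forward : ∀ n : ℕ, ∀ (α : List ℕ) (T : ℕ × ℕ → ℕ),
    (∀ a ∈ α, 0 < a) → SimpleComp α → IsSYRT n α T → colsIncreasing α T := by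
  intro n
  induction n using Nat.strong_induction_on with
  | _ n IH =>
  intro α T hpos hsimp hT
  obtain ⟨hzero, hbd, hinj, hsurj, hrow, hcol1, hR3⟩ := hT
  rcases Nat.eq_zero_or_pos n with h0 | h1
  · intro c r r' hd _ _
    exfalso
    have := hbd _ hd
    omega
  obtain ⟨κ0, hκ0, hTκ0⟩ := hsurj n h1 le_rfl
  obtain ⟨c0, r0⟩ := κ0
  have hκ0' := hκ0; rw [inDiagram_iff] at hκ0'
  obtain ⟨e1, e2, e3, e4⟩ := hκ0'
  have hc0 : c0 = α.getD (r0-1) 0 := by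
    by_contra hne
    have hd : inDiagram α (c0+1, r0) := by
      rw [inDiagram_iff]; exact ⟨e1, e2, by omega, by omega⟩
    have hh1 := hrow c0 r0 hκ0 hd
    have hh2 := (hbd _ hd).2
    omega
  have hc1 : c0 = 1 → r0 = α.length := by
    intro hc; by_contra hne
    have hd : inDiagram α (1, r0+1) := by
      rw [inDiagram_iff]
      refine ⟨by omega, by omega, le_rfl, ?_⟩
      have := getD_pos hpos (show r0+1-1 < α.length by omega)
      omega
    have hh1 := hcol1 r0 (r0+1) (hc ▸ hκ0) hd (by omega)
    have hh2 := (hbd _ hd).2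
    have hTn : T (1, r0) = n := by rw [← hc]; exact hTκ0
    omega
  have hiii : ∀ r, r0 < r → r ≤ α.length → α.getD (r-1) 0 + 1 ≠ α.getD (r0-1) 0 := by
    intro r hr hrl heq
    have hαr : 0 < α.getD (r-1) 0 := getD_pos hpos (by omega)
    have hd1 : inDiagram α (c0 - 1, r) := by
      rw [inDiagram_iff]; exact ⟨by omega, hrl, by omega, by omega⟩
    have hd2 : inDiagram α (c0 - 1 + 1, r0) := by
      rw [show c0 - 1 + 1 = c0 by omega]; exact hκ0
    have hne : T (c0-1, r) ≠ n := by
      intro h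
      have heq2 := hinj _ _ hd1 hκ0 (h.trans hTκ0.symm)
      rw [Prod.mk.injEq] at heq2
      omega
    have hlt : T (c0-1, r) < T (c0-1+1, r0) := by
      rw [show c0-1+1 = c0 by omega, hTκ0]
      exact lt_of_le_of_ne (hbd _ hd1).2 hne
    obtain ⟨hd3, _⟩ := hR3 (c0-1) r r0 hr hd1 hd2 hlt
    rw [inDiagram_iff] at hd3
    omega
  have hB' : ∀ r, r0 < r → r ≤ α.length → α.getD (r-1) 0 < c0 := by
    intro r hr hrl
    by_contra hge; push_neg at hge
    by_cases hco : c0 = 1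
    · have := hc1 hco; omega
    · obtain ⟨k, hk1, hk2, hk3⟩ :=
        hsimp r0 r e1 hr hrl (by omega) (by omega)
      by_cases hkr : k = r0
      · rw [hkr] at hk3; omega
      · exact hiii k (by omega) (by omega) hk3
  have hc1' : α.getD (r0-1) 0 = 1 → r0 = α.length := by
    intro h; exact hc1 (by omega)
  have hDβ : ∀ κ, inDiagram (reduceAt α r0) κ ↔ inDiagram α κ ∧ κ ≠ ((c0:ℕ), r0) := by
    intro κ
    have hiff := reduce_diagram e1 e2 hc1' κ
    rw [← hc0] at hiff
    exact hiff
  have hposβ : ∀ a ∈ reduceAt α r0, 0 < a := reduce_pos e1 e2 hpos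
  have hsimpβ : SimpleComp (reduceAt α r0) :=
    reduce_simple e1 e2 hsimp hiii
      (by intro r h h'; have := hB' r h h'; omega) hc1'
  set T' : ℕ × ℕ → ℕ := fun κ => if κ = ((c0 : ℕ), r0) then 0 else T κ with hT'def
  have hT'eq : ∀ κ, κ ≠ ((c0:ℕ), r0) → T' κ = T κ := by
    intro κ h; simp only [hT'def]; rw [if_neg h]
  have hTne : ∀ κ, inDiagram α κ → κ ≠ ((c0:ℕ), r0) → T κ ≠ n := by
    intro κ hκ hne h
    exact hne (hinj _ _ hκ hκ0 (by rw [h, hTκ0]))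
  have hT' : IsSYRT (n-1) (reduceAt α r0) T' := by
    refine ⟨?_, ?_, ?_, ?_, ?_, ?_, ?_⟩
    · intro κ hκ
      by_cases h : κ = ((c0:ℕ), r0)
      · simp only [hT'def]; rw [if_pos h]
      · rw [hT'eq κ h]
        apply hzero
        intro hκα
        exact hκ ((hDβ κ).mpr ⟨hκα, h⟩)
    · intro κ hκ
      obtain ⟨hκα, hne⟩ := (hDβ κ).mp hκ
      rw [hT'eq κ hne]
      have hh1 := hbd κ hκα
      have hh2 := hTne κ hκα hne
      omega
    · intro κ κ' hκ hκ' h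
      obtain ⟨b1, b2⟩ := (hDβ κ).mp hκ
      obtain ⟨b1', b2'⟩ := (hDβ κ').mp hκ'
      rw [hT'eq κ b2, hT'eq κ' b2'] at h
      exact hinj _ _ b1 b1' h
    · intro v hv1 hv2
      obtain ⟨κ, hκ, hTv⟩ := hsurj v hv1 (by omega)
      have hne : κ ≠ ((c0:ℕ), r0) := by
        intro h; rw [h, hTκ0] at hTv; omega
      exact ⟨κ, (hDβ κ).mpr ⟨hκ, hne⟩, by rw [hT'eq κ hne]; exact hTv⟩
    · intro c r hκ1 hκ2
      obtain ⟨b1, b2⟩ := (hDβ _).mp hκ1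
      obtain ⟨b1', b2'⟩ := (hDβ _).mp hκ2
      rw [hT'eq _ b2, hT'eq _ b2']
      exact hrow c r b1 b1'
    · intro r r' hκ1 hκ2 hrr
      obtain ⟨b1, b2⟩ := (hDβ _).mp hκ1
      obtain ⟨b1', b2'⟩ := (hDβ _).mp hκ2
      rw [hT'eq _ b2, hT'eq _ b2']
      exact hcol1 r r' b1 b1' hrr
    · intro c r r' hrr hκ1 hκ2 hlt
      obtain ⟨b1, b2⟩ := (hDβ _).mp hκ1
      obtain ⟨b1', b2'⟩ := (hDβ _).mp hκ2
      rw [hT'eq _ b2, hT'eq _ b2'] at hlt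
      obtain ⟨hd3, hlt3⟩ := hR3 c r r' hrr b1 b1' hlt
      have hne3 : ((c+1 : ℕ), r) ≠ ((c0:ℕ), r0) := by
        intro h
        have hTn : T (c+1, r) = n := by rw [h, hTκ0]
        have := (hbd _ b1').2
        omega
      refine ⟨(hDβ _).mpr ⟨hd3, hne3⟩, ?_⟩
      rw [hT'eq _ hne3, hT'eq _ b2']
      exact hlt3
  have hcolβ := IH (n-1) (by omega) (reduceAt α r0) T' hposβ hsimpβ hT'
  intro c r r' hd hd' hrr
  by_cases hA : ((c:ℕ), r') = ((c0:ℕ), r0)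
  · have hTn : T (c, r') = n := by rw [hA]; exact hTκ0
    have hne : ((c:ℕ), r) ≠ ((c0:ℕ), r0) := by
      intro h
      rw [Prod.mk.injEq] at h hA
      omega
    have hh1 := hTne _ hd hne
    have hh2 := (hbd _ hd).2
    rw [hTn]
    omega
  by_cases hA2 : ((c:ℕ), r) = ((c0:ℕ), r0)
  · exfalso
    rw [Prod.mk.injEq] at hA2
    rw [inDiagram_iff] at hd'
    have := hB' r' (by omega) (by omega)
    omega
  · have b1 := (hDβ (c, r)).mpr ⟨hd, hA2⟩
    have b2 := (hDβ (c, r')).mpr ⟨hd', hA⟩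
    have hfin := hcolβ c r r' b1 b2 hrr
    rw [hT'eq _ hA2, hT'eq _ hA] at hfin
    exact hfin

end S13
end Stmt13Aux

/-- A composition `α` of `n` is simple iff for every `T ∈ SYRT(α)` the
entries increase from bottom to top in every column of `T`. -/
theorem stmt13 (n : ℕ) (α : List ℕ) (hα : YRS.IsComposition n α) :
    YRS.SimpleComp α ↔ ∀ T, YRS.IsSYRT n α T → YRS.colsIncreasing α T := by
  constructor
  · intro hs T hT
    exact S13.forward n α T hα.1 hs hT
  · intro h
    by_contra hns
    rw [YRS.SimpleComp] at hns
    push_neg at hns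
    obtain ⟨i, j, hi, hij, hjl, h2, hle, hk⟩ := hns
    obtain ⟨T, hT, hcol⟩ := S13.backward hα i j hi hij hjl h2 hle hk
    exact hcol (h T hT)
end

section
/- For any composition α, the threads of D(α) partition D(α): every cell of D(α) belongs to exactly one thread. -/
open Classical

namespace YRS

section Aux

variable {α : List ℕ}

lemma le_width {a : ℕ} (h : a ∈ α) : a ≤ width α := by
  induction α with
  | nil => simp at h
  | cons b l ih =>
    rw [List.mem_cons] at h
    rcases h with rfl | h
    · exact le_max_left _ _
    · exact le_trans (ih h) (le_max_right _ _)

lemma col_le_width {κ : ℕ × ℕ} (h : inDiagram α κ) : κ.1 ≤ width α := by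
  obtain ⟨h1, h2, h3, h4⟩ := h
  refine h4.trans (le_width ?_)
  have hlt : κ.2 - 1 < α.length := by omega
  rw [List.getD_eq_getElem α 0 hlt]
  exact List.getElem_mem _

lemma inD_left {κ : ℕ × ℕ} (h : inDiagram α κ) (h2 : 2 ≤ κ.1) :
    inDiagram α (κ.1 - 1, κ.2) := by
  obtain ⟨h1, hl, h3, h4⟩ := h
  refine ⟨h1, hl, by omega, ?_⟩
  show κ.1 - 1 ≤ α.getD (κ.2 - 1) 0
  omega

lemma nextCell_spec {S : Finset (ℕ × ℕ)} {κ κ' : ℕ × ℕ}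
    (h : nextCell α S κ = some κ') :
    κ'.1 = κ.1 + 1 ∧ κ'.2 < κ.2 ∧ inDiagram α κ' ∧ κ' ∉ S ∧
      ∀ ρ, κ'.2 < ρ → ρ < κ.2 → inDiagram α (κ.1 + 1, ρ) → (κ.1 + 1, ρ) ∈ S := by
  unfold nextCell at h
  split at h
  · rename_i hex
    obtain ⟨h1, h2, h3, h4⟩ := hex.choose_spec
    injection h with h
    subst h
    exact ⟨rfl, h1, h2, h3, fun ρ hρ1 hρ2 => h4 ρ hρ1 hρ2⟩
  · exact absurd h (by simp)

lemma nextCell_exists {S : Finset (ℕ × ℕ)} {κ : ℕ × ℕ} {ρ : ℕ}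
    (hin : inDiagram α (κ.1 + 1, ρ)) (hlt : ρ < κ.2) (hns : (κ.1 + 1, ρ) ∉ S) :
    ∃ κ', nextCell α S κ = some κ' ∧ ρ ≤ κ'.2 := by
  have hρ1 : 1 ≤ ρ := hin.1
  have hP : ∃ r, r < κ.2 ∧ inDiagram α (κ.1 + 1, r) ∧ (κ.1 + 1, r) ∉ S ∧
      ∀ r', r < r' → r' < κ.2 → inDiagram α (κ.1 + 1, r') → (κ.1 + 1, r') ∈ S := by
    set P : ℕ → Prop := fun t => inDiagram α (κ.1 + 1, t) ∧ (κ.1 + 1, t) ∉ S with hPdef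
    have hρP : P ρ := ⟨hin, hns⟩
    have hρb : ρ ≤ κ.2 - 1 := by omega
    refine ⟨Nat.findGreatest P (κ.2 - 1), ?_, ?_, ?_, ?_⟩
    · have := Nat.findGreatest_le (P := P) (κ.2 - 1); omega
    · exact (Nat.findGreatest_spec hρb hρP).1
    · exact (Nat.findGreatest_spec hρb hρP).2
    · intro r' h1 h2 h3
      by_contra hr'S
      exact absurd (Nat.findGreatest_is_greatest h1 (by omega)) (by simp [hPdef, h3, hr'S])
  have hC := hP.choose_spec
  refine ⟨(κ.1 + 1, hP.choose), ?_, ?_⟩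
  · unfold nextCell
    rw [dif_pos hP]
  · by_contra hcon
    push_neg at hcon
    exact hns (hC.2.2.2 ρ (by omega) hlt hin)

lemma threadAux_succ (S : Finset (ℕ × ℕ)) (f : ℕ) (κ : ℕ × ℕ) :
    threadAux α S (f + 1) κ =
      κ :: (match nextCell α S κ with
        | none => []
        | some κ' => threadAux α S f κ') := rfl

lemma threadAux_succ_none {S : Finset (ℕ × ℕ)} {f : ℕ} {κ : ℕ × ℕ}
    (h : nextCell α S κ = none) : threadAux α S (f + 1) κ = [κ] := by
  rw [threadAux_succ, h]

lemma threadAux_succ_some {S : Finset (ℕ × ℕ)} {f : ℕ} {κ κ' : ℕ × ℕ}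
    (h : nextCell α S κ = some κ') :
    threadAux α S (f + 1) κ = κ :: threadAux α S f κ' := by
  rw [threadAux_succ, h]

lemma self_mem_threadAux (S : Finset (ℕ × ℕ)) (f : ℕ) (κ : ℕ × ℕ) :
    κ ∈ threadAux α S f κ := by
  cases f with
  | zero => exact List.mem_cons_self
  | succ f => rw [threadAux_succ]; exact List.mem_cons_self

lemma threadAux_mem {S : Finset (ℕ × ℕ)} {f : ℕ} {κ x : ℕ × ℕ}
    (hκ : inDiagram α κ) (hx : x ∈ threadAux α S f κ) :
    x = κ ∨ (inDiagram α x ∧ x ∉ S ∧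
      ∃ κ'', κ'' ∈ threadAux α S f κ ∧ inDiagram α κ'' ∧ nextCell α S κ'' = some x) := by
  induction f generalizing κ with
  | zero => left; simpa [threadAux] using hx
  | succ f ih =>
    cases hnc : nextCell α S κ with
    | none =>
      rw [threadAux_succ_none hnc] at hx
      left; simpa using hx
    | some κ₂ =>
      rw [threadAux_succ_some hnc] at hx
      rcases List.mem_cons.mp hx with rfl | hx'
      · left; rfl
      · obtain ⟨h1, h2, h3, h4, -⟩ := nextCell_spec hnc
        rcases ih h3 hx' with rfl | ⟨hd, hs, κ'', hm, hkd, hnc2⟩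
        · exact Or.inr ⟨h3, h4, κ, self_mem_threadAux _ _ _, hκ, hnc⟩
        · exact Or.inr ⟨hd, hs, κ'',
            by rw [threadAux_succ_some hnc]; exact List.mem_cons_of_mem _ hm, hkd, hnc2⟩

lemma threadAux_step {S : Finset (ℕ × ℕ)} {f : ℕ} {κ κ' : ℕ × ℕ}
    (hmem : κ' ∈ threadAux α S f κ) (hfuel : width α < κ.1 + f) {ρ : ℕ}
    (hρ : ρ < κ'.2) (hin : inDiagram α (κ'.1 + 1, ρ)) (hns : (κ'.1 + 1, ρ) ∉ S) :
    ∃ t, ρ ≤ t ∧ t < κ'.2 ∧ inDiagram α (κ'.1 + 1, t) ∧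
      (κ'.1 + 1, t) ∈ threadAux α S f κ := by
  induction f generalizing κ with
  | zero =>
    simp only [threadAux, List.mem_singleton] at hmem
    subst hmem
    have := col_le_width hin
    simp at this
    omega
  | succ f ih =>
    cases hnc : nextCell α S κ with
    | none =>
      rw [threadAux_succ_none hnc] at hmem
      simp only [List.mem_singleton] at hmem
      subst hmem
      obtain ⟨κ'', hsome, hle⟩ := nextCell_exists hin hρ hns
      rw [hnc] at hsome; exact absurd hsome (by simp)
    | some κ₂ =>
      rw [threadAux_succ_some hnc] at hmem
      rcases List.mem_cons.mp hmem with rfl | hmem'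
      · obtain ⟨κ'', hsome, hle⟩ := nextCell_exists hin hρ hns
        rw [hnc] at hsome
        injection hsome with hsome
        subst hsome
        obtain ⟨hc1, hc2, hc3, hc4, -⟩ := nextCell_spec hnc
        refine ⟨κ₂.2, hle, hc2, ?_, ?_⟩
        · rw [← hc1]; simpa using hc3
        · rw [threadAux_succ_some hnc]
          refine List.mem_cons_of_mem _ ?_
          have : (κ'.1 + 1, κ₂.2) = κ₂ := by rw [← hc1]
          rw [this]
          exact self_mem_threadAux _ _ _
      · obtain ⟨hc1, hc2, hc3, hc4, -⟩ := nextCell_spec hnc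
        obtain ⟨t, ht1, ht2, ht3, ht4⟩ := ih hmem' (by omega)
        exact ⟨t, ht1, ht2, ht3, by rw [threadAux_succ_some hnc]; exact List.mem_cons_of_mem _ ht4⟩

lemma threadsAux_cons (κ : ℕ × ℕ) (rest : List (ℕ × ℕ)) (S : Finset (ℕ × ℕ)) :
    threadsAux α (κ :: rest) S =
      threadAux α S (width α) κ ::
        threadsAux α rest (S ∪ (threadAux α S (width α) κ).toFinset) := rfl

lemma mem_of_mem_threadsAux {l : List (ℕ × ℕ)} {S : Finset (ℕ × ℕ)}
    (hl : ∀ κ ∈ l, inDiagram α κ) {L : List (ℕ × ℕ)} {x : ℕ × ℕ}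
    (hL : L ∈ threadsAux α l S) (hx : x ∈ L) : inDiagram α x := by
  induction l generalizing S with
  | nil => simp [threadsAux] at hL
  | cons κ rest ih =>
    rw [threadsAux_cons] at hL
    rcases List.mem_cons.mp hL with rfl | hL'
    · rcases threadAux_mem (hl κ (List.mem_cons_self)) hx with rfl | ⟨hd, -, -⟩
      · exact hl x (List.mem_cons_self)
      · exact hd
    · exact ih (fun κ' h => hl κ' (List.mem_cons_of_mem _ h)) hL'

lemma exists_thread_of_mem {l : List (ℕ × ℕ)} {κ : ℕ × ℕ} (h : κ ∈ l)
    (S : Finset (ℕ × ℕ)) : ∃ L ∈ threadsAux α l S, κ ∈ L := by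
  induction l generalizing S with
  | nil => simp at h
  | cons κ₀ rest ih =>
    rcases List.mem_cons.mp h with rfl | h'
    · exact ⟨_, List.mem_cons_self, self_mem_threadAux _ _ _⟩
    · obtain ⟨L, hL, hκ⟩ := ih h' _
      exact ⟨L, List.mem_cons_of_mem _ hL, hκ⟩

lemma thread_structure {l : List (ℕ × ℕ)} {S : Finset (ℕ × ℕ)} {L : List (ℕ × ℕ)}
    (hL : L ∈ threadsAux α l S) :
    ∃ S' κ₀, κ₀ ∈ l ∧ L = threadAux α S' (width α) κ₀ ∧ S ⊆ S' ∧
      ∀ x ∈ S', x ∈ S ∨ ∃ L' ∈ threadsAux α l S, x ∈ L' := by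
  induction l generalizing S with
  | nil => simp [threadsAux] at hL
  | cons κ rest ih =>
    rw [threadsAux_cons] at hL
    rcases List.mem_cons.mp hL with rfl | hL'
    · exact ⟨S, κ, List.mem_cons_self, rfl, le_refl _, fun x hx => Or.inl hx⟩
    · obtain ⟨S', κ₀, h1, h2, h3, h4⟩ := ih hL'
      refine ⟨S', κ₀, List.mem_cons_of_mem _ h1, h2, ?_, ?_⟩
      · exact fun x hx => h3 (Finset.mem_union.mpr (Or.inl hx))
      · intro x hx
        rcases h4 x hx with hx' | ⟨L', hL'', hxL⟩
        · rcases Finset.mem_union.mp hx' with h | h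
          · exact Or.inl h
          · exact Or.inr ⟨_, by rw [threadsAux_cons]; exact List.mem_cons_self,
              List.mem_toFinset.mp h⟩
        · exact Or.inr ⟨L', by rw [threadsAux_cons]; exact List.mem_cons_of_mem _ hL'', hxL⟩

def NeverTarget (α : List ℕ) (κ₀ : ℕ × ℕ) : Prop :=
  ∀ (S : Finset (ℕ × ℕ)) (κ : ℕ × ℕ), inDiagram α κ → nextCell α S κ ≠ some κ₀

lemma boundary_unique {c r r' : ℕ} (h2 : 2 ≤ c) (hb : Boundary α (c, r))
    (hb' : Boundary α (c, r')) : r = r' := by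
  rcases hb.2 with h | h
  · simp at h; omega
  rcases hb'.2 with h' | h'
  · simp at h'; omega
  by_contra hne
  rcases Nat.lt_or_ge r r' with hlt | hge
  · exact (h r' hlt).1 hb'.1
  · exact (h' r (by omega)).1 hb.1

lemma mem_boundaryList_iff {κ : ℕ × ℕ} (hpos : ∀ a ∈ α, 0 < a) :
    κ ∈ boundaryList α ↔
      (κ.1 = 1 ∧ 1 ≤ κ.2 ∧ κ.2 ≤ α.length) ∨ (2 ≤ κ.1 ∧ Boundary α κ) := by
  constructor
  · intro h
    rcases List.mem_append.mp h with h | h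
    · obtain ⟨r, hr, hre⟩ := List.mem_map.mp h
      rw [List.mem_range] at hr
      rw [← hre]
      exact Or.inl ⟨rfl, by omega, by simpa using hr⟩
    · obtain ⟨c, hc, hce⟩ := List.mem_filterMap.mp h
      rw [List.mem_range] at hc
      by_cases hex : ∃ r, Boundary α (c + 2, r)
      · rw [dif_pos hex] at hce
        injection hce with hce
        subst hce
        exact Or.inr ⟨by simp, hex.choose_spec⟩
      · rw [dif_neg hex] at hce; simp at hce
  · rintro (⟨h1, h2, h3⟩ | ⟨h1, h2⟩)
    · refine List.mem_append.mpr (Or.inl ?_)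
      refine List.mem_map.mpr ⟨κ.2 - 1, List.mem_range.mpr (by omega), ?_⟩
      have : κ.2 - 1 + 1 = κ.2 := by omega
      rw [this, ← h1]
    · obtain ⟨c0, r0⟩ := κ
      simp only at h1 ⊢
      refine List.mem_append.mpr (Or.inr ?_)
      have hw := col_le_width h2.1
      simp only at hw
      refine List.mem_filterMap.mpr ⟨c0 - 2, List.mem_range.mpr (by omega), ?_⟩
      have hc2 : c0 - 2 + 2 = c0 := by omega
      have hex : ∃ r, Boundary α (c0 - 2 + 2, r) := ⟨r0, by rw [hc2]; exact h2⟩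
      rw [dif_pos hex]
      have hB := hex.choose_spec
      have h2' : Boundary α (c0 - 2 + 2, r0) := by rw [hc2]; exact h2
      have heq : hex.choose = r0 := boundary_unique (by omega) hB h2'
      exact congrArg _ (Prod.ext_iff.mpr ⟨hc2, heq⟩)

lemma boundaryList_inD (hpos : ∀ a ∈ α, 0 < a) {κ : ℕ × ℕ}
    (h : κ ∈ boundaryList α) : inDiagram α κ := by
  rcases (mem_boundaryList_iff hpos).mp h with ⟨h1, h2, h3⟩ | ⟨h1, h2⟩
  · refine ⟨h2, h3, by omega, ?_⟩
    rw [h1]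
    refine Nat.one_le_iff_ne_zero.mpr (Nat.pos_iff_ne_zero.mp ?_)
    refine hpos _ ?_
    have hlt : κ.2 - 1 < α.length := by omega
    rw [List.getD_eq_getElem α 0 hlt]
    exact List.getElem_mem _
  · exact h2.1

lemma boundary_neverTarget (hpos : ∀ a ∈ α, 0 < a) {κ₀ : ℕ × ℕ}
    (h : κ₀ ∈ boundaryList α) : NeverTarget α κ₀ := by
  intro S κ hκ hnc
  obtain ⟨h1, h2, h3, h4, -⟩ := nextCell_spec hnc
  rcases (mem_boundaryList_iff hpos).mp h with ⟨hc1, -, -⟩ | ⟨hc1, hB⟩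
  · have := hκ.2.2.1
    omega
  · rcases hB.2 with hx | hx
    · omega
    · refine (hx κ.2 h2).2 ?_
      have : (κ₀.1 - 1, κ.2) = κ := by
        rw [Prod.ext_iff]; simp; omega
      rw [this]
      exact hκ

lemma boundaryList_nodup : (boundaryList α).Nodup := by
  refine List.Nodup.append ?_ ?_ ?_
  · refine List.Nodup.map ?_ (List.nodup_range)
    intro a b hab
    simp only [Prod.mk.injEq] at hab
    omega
  · refine List.Nodup.filterMap ?_ (List.nodup_range)
    intro a a' b hb hb'
    by_cases hex : ∃ r, Boundary α (a + 2, r)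
    · rw [dif_pos hex] at hb
      by_cases hex' : ∃ r, Boundary α (a' + 2, r)
      · rw [dif_pos hex'] at hb'
        simp only [Option.mem_def, Option.some.injEq] at hb hb'
        have h := (Prod.ext_iff.mp (hb.trans hb'.symm)).1
        simp only at h
        omega
      · rw [dif_neg hex'] at hb'; simp at hb'
    · rw [dif_neg hex] at hb; simp at hb
  · intro x hx hx'
    obtain ⟨r, -, hre⟩ := List.mem_map.mp hx
    obtain ⟨c, -, hce⟩ := List.mem_filterMap.mp hx'
    by_cases hex : ∃ r, Boundary α (c + 2, r)
    · rw [dif_pos hex] at hce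
      simp only [Option.mem_def, Option.some.injEq] at hce
      rw [← hre] at hce
      have h := (Prod.ext_iff.mp hce).1
      simp only at h
      omega
    · rw [dif_neg hex] at hce; simp at hce

lemma threads_disjoint {l : List (ℕ × ℕ)} {S : Finset (ℕ × ℕ)}
    (hl : ∀ κ ∈ l, inDiagram α κ ∧ κ ∉ S ∧ NeverTarget α κ)
    (hnd : l.Pairwise (· ≠ ·)) :
    (∀ L ∈ threadsAux α l S, ∀ x ∈ L, x ∉ S) ∧
    (∀ L₁ ∈ threadsAux α l S, ∀ L₂ ∈ threadsAux α l S,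
      ∀ x, x ∈ L₁ → x ∈ L₂ → L₁ = L₂) := by
  induction l generalizing S with
  | nil => simp [threadsAux]
  | cons κ rest ih =>
    obtain ⟨hκD, hκS, hκT⟩ := hl κ (List.mem_cons_self)
    rw [List.pairwise_cons] at hnd
    have hTsub : ∀ x ∈ threadAux α S (width α) κ, x ∉ S := by
      intro x hx
      rcases threadAux_mem hκD hx with rfl | ⟨-, h, -⟩
      · exact hκS
      · exact h
    have hrest : ∀ κ' ∈ rest,
        inDiagram α κ' ∧ κ' ∉ S ∪ (threadAux α S (width α) κ).toFinset ∧
          NeverTarget α κ' := by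
      intro κ' hκ'
      obtain ⟨hD', hS', hT'⟩ := hl κ' (List.mem_cons_of_mem _ hκ')
      refine ⟨hD', ?_, hT'⟩
      rw [Finset.mem_union]
      rintro (h | h)
      · exact hS' h
      · rw [List.mem_toFinset] at h
        rcases threadAux_mem hκD h with h' | ⟨-, -, κ'', -, hkd, hnc⟩
        · exact hnd.1 κ' hκ' h'.symm
        · exact hT' S κ'' hkd hnc
    have ihh := ih hrest hnd.2
    constructor
    · intro L hL x hx
      rw [threadsAux_cons] at hL
      rcases List.mem_cons.mp hL with rfl | hL'
      · exact hTsub x hx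
      · intro hxS
        exact ihh.1 L hL' x hx (Finset.mem_union.mpr (Or.inl hxS))
    · intro L₁ h₁ L₂ h₂ x hx₁ hx₂
      rw [threadsAux_cons] at h₁ h₂
      rcases List.mem_cons.mp h₁ with rfl | h₁' <;>
        rcases List.mem_cons.mp h₂ with h₂e | h₂'
      · rw [h₂e]
      · exact absurd (Finset.mem_union.mpr (Or.inr (List.mem_toFinset.mpr hx₁)))
          (ihh.1 L₂ h₂' x hx₂)
      · subst h₂e
        exact absurd (Finset.mem_union.mpr (Or.inr (List.mem_toFinset.mpr hx₂)))
          (ihh.1 L₁ h₁' x hx₁)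
      · exact ihh.2 L₁ h₁' L₂ h₂' x hx₁ hx₂

lemma threads_def : threads α = threadsAux α (boundaryList α) ∅ := rfl

lemma covered (hpos : ∀ a ∈ α, 0 < a) :
    ∀ c r, inDiagram α (c, r) → ∃ L ∈ threads α, (c, r) ∈ L := by
  intro c
  induction c using Nat.strong_induction_on with
  | _ c ihc =>
  intro r hin
  by_contra hnc
  push_neg at hnc
  have hc1 : 1 ≤ c := hin.2.2.1
  rcases Nat.lt_or_ge c 2 with hc2 | hc2
  · -- c = 1 : first column, boundary cell
    have hb : (c, r) ∈ boundaryList α := by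
      refine (mem_boundaryList_iff hpos).mpr (Or.inl ⟨?_, hin.1, hin.2.1⟩)
      show c = 1
      omega
    obtain ⟨L, hL, hm⟩ := exists_thread_of_mem hb (∅ : Finset (ℕ × ℕ))
    exact hnc L hL hm
  · by_cases hA : ∃ s, r < s ∧ inDiagram α (c - 1, s)
    · set s0 := Nat.find hA with hs0
      obtain ⟨hrs0, hins0⟩ := Nat.find_spec hA
      obtain ⟨L, hL, hmem⟩ := ihc (c - 1) (by omega) s0 hins0
      rw [threads_def] at hL
      obtain ⟨S', κ₀, hκ₀, hLeq, -, hS'⟩ := thread_structure hL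
      have hκ₀D : inDiagram α κ₀ := boundaryList_inD hpos hκ₀
      have hκ₀1 : 1 ≤ κ₀.1 := hκ₀D.2.2.1
      have hcrS' : (c, r) ∉ S' := by
        intro hcon
        rcases hS' _ hcon with h | ⟨L', hL', hxL⟩
        · simp at h
        · exact hnc L' (by rwa [threads_def]) hxL
      rw [hLeq] at hmem
      have hin' : inDiagram α ((c - 1, s0).1 + 1, r) := by
        show inDiagram α (c - 1 + 1, r)
        have : c - 1 + 1 = c := by omega
        rw [this]; exact hin
      have hns' : ((c - 1, s0).1 + 1, r) ∉ S' := by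
        show (c - 1 + 1, r) ∉ S'
        have : c - 1 + 1 = c := by omega
        rw [this]; exact hcrS'
      obtain ⟨t, ht1, ht2, ht3, ht4⟩ :=
        threadAux_step hmem (by omega) (ρ := r) hrs0 hin' hns'
      have hceq : (c - 1, s0).1 + 1 = c := by show c - 1 + 1 = c; omega
      rw [hceq] at ht3 ht4
      simp only at ht2
      rcases Nat.eq_or_lt_of_le ht1 with rfl | htr
      · refine hnc L ?_ ?_
        · rwa [threads_def]
        · rw [hLeq]; exact ht4
      · have hctD : inDiagram α (c - 1, t) := inD_left ht3 hc2
        have : s0 ≤ t := Nat.find_min' hA ⟨htr, hctD⟩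
        omega
    · push_neg at hA
      have hB : ∀ s, r < s → ¬ inDiagram α (c, s) := by
        intro s hs hcon
        exact hA s hs (inD_left hcon hc2)
      have hBd : Boundary α (c, r) := by
        exact ⟨hin, Or.inr fun ρ hρ => ⟨hB ρ hρ, hA ρ hρ⟩⟩
      have hb : (c, r) ∈ boundaryList α :=
        (mem_boundaryList_iff hpos).mpr (Or.inr ⟨hc2, hBd⟩)
      obtain ⟨L, hL, hm⟩ := exists_thread_of_mem hb (∅ : Finset (ℕ × ℕ))
      exact hnc L hL hm

end Aux

end YRS

/-- The threads of `D(α)` partition `D(α)`: every thread consists of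
cells of `D(α)`, and every cell of `D(α)` belongs to exactly one thread. -/
theorem stmt14 (n : ℕ) (α : List ℕ) (hα : YRS.IsComposition n α) :
    (∀ L ∈ YRS.threads α, ∀ κ ∈ L, YRS.inDiagram α κ) ∧
    (∀ κ, YRS.inDiagram α κ → ∃! L : List (ℕ × ℕ), L ∈ YRS.threads α ∧ κ ∈ L) := by
  have hpos := hα.1
  constructor
  · intro L hL κ hκ
    exact YRS.mem_of_mem_threadsAux
      (fun κ' h => YRS.boundaryList_inD hpos h) (by rwa [YRS.threads_def] at hL) hκ
  · intro κ hκ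
    obtain ⟨L, hL, hm⟩ := YRS.covered hpos κ.1 κ.2 (by rwa [Prod.mk.eta])
    have hdisj := YRS.threads_disjoint
      (l := YRS.boundaryList α) (S := (∅ : Finset (ℕ × ℕ)))
      (fun κ' h => ⟨YRS.boundaryList_inD hpos h, by simp,
        YRS.boundary_neverTarget hpos h⟩) YRS.boundaryList_nodup
    refine ⟨L, ⟨hL, hm⟩, ?_⟩
    rintro L' ⟨hL', hm'⟩
    exact hdisj.2 L' (by rwa [YRS.threads_def] at hL') L
      (by rwa [YRS.threads_def] at hL) κ hm' hm
end
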